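/- arXiv:2211.07150 — 4 statements merged into one kernel-verified Lean document; each statement's English description precedes it below -/
import Mathlib

section
/- Let G = (V,E) be a bipartite multigraph. Then the edge-coloring number of G equals its maximum degree: χ(G) = Δ(G). -/
open Finset

/-- The set of edges incident to a vertex `v` (the edge star `δ(v)`). -/
def edgeStar {V E : Type*} [Fintype E] [DecidableEq V] (ends : E → Sym2 V) (v : V) :
    Finset E :=
  Finset.univ.filter (fun e => v ∈ ends e)

/-- The degree of a vertex `v`: the number of edges incident to `v`. -/
def degree {V E : Type*} [Fintype E] [DecidableEq V] (ends : E → Sym2 V) (v : V) : ℕ :=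
  (edgeStar ends v).card

/-- The maximum degree `Δ(G)` of the multigraph. -/
def maxDegree (V E : Type*) [Fintype V] [Fintype E] [DecidableEq V] (ends : E → Sym2 V) : ℕ :=
  Finset.univ.sup (fun v : V => degree ends v)

/-- `π : E → Fin k` is a proper edge-coloring: distinct edges sharing an endpoint
get different colors. -/
def IsProperEdgeColoring {V E : Type*} {k : ℕ} (ends : E → Sym2 V) (π : E → Fin k) : Prop :=
  ∀ e₁ e₂ : E, e₁ ≠ e₂ → (∃ v : V, v ∈ ends e₁ ∧ v ∈ ends e₂) → π e₁ ≠ π e₂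


set_option linter.unusedSectionVars false


section KonigAux

variable {V E : Type*} [DecidableEq V] [DecidableEq E] {Δ : ℕ}

def kF (ends : E → Sym2 V) (π : E → Fin Δ) (S' : Finset E) (x : V) (c : Fin Δ) : Finset E :=
  S'.filter fun f => x ∈ ends f ∧ π f = c

lemma mem_kF {ends : E → Sym2 V} {π : E → Fin Δ} {S' : Finset E} {x : V} {c : Fin Δ} {f : E} :
    f ∈ kF ends π S' x c ↔ f ∈ S' ∧ x ∈ ends f ∧ π f = c := by
  simp [kF]

noncomputable def kstep (ends : E → Sym2 V) (π : E → Fin Δ) (S' : Finset E) (α β : Fin Δ)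
    (s : V × Bool) : Option (V × Bool) :=
  if h : (kF ends π S' s.1 (cond s.2 α β)).Nonempty then
    some (Sym2.Mem.other' (mem_kF.mp h.choose_spec).2.1, !s.2)
  else none

noncomputable def kedge (ends : E → Sym2 V) (π : E → Fin Δ) (S' : Finset E) (α β : Fin Δ)
    (s : V × Bool) : Option E :=
  if h : (kF ends π S' s.1 (cond s.2 α β)).Nonempty then some h.choose else none

noncomputable def kwalk (ends : E → Sym2 V) (π : E → Fin Δ) (S' : Finset E) (α β : Fin Δ)
    (w : V) : ℕ → Option (V × Bool)
  | 0 => some (w, true)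
  | n+1 => (kwalk ends π S' α β w n).bind (kstep ends π S' α β)

variable {ends : E → Sym2 V} {π : E → Fin Δ} {S' : Finset E} {α β : Fin Δ}

/-- master spec when the filter is nonempty -/
lemma kstep_pos {s : V × Bool} (h : (kF ends π S' s.1 (cond s.2 α β)).Nonempty) :
    ∃ f t, kedge ends π S' α β s = some f ∧ kstep ends π S' α β s = some t ∧
      f ∈ kF ends π S' s.1 (cond s.2 α β) ∧ t.1 ∈ ends f ∧ t.2 = !s.2 ∧
      (¬ (ends f).IsDiag → t.1 ≠ s.1) := by
  refine ⟨h.choose, ⟨Sym2.Mem.other' (mem_kF.mp h.choose_spec).2.1, !s.2⟩, ?_, ?_, h.choose_spec,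
    Sym2.other_mem' _, rfl, fun hd => ?_⟩
  · rw [kedge, dif_pos h]
  · rw [kstep, dif_pos h]
  · rw [← Sym2.other_eq_other']
    exact Sym2.other_ne hd _

lemma kstep_none_iff {s : V × Bool} :
    kstep ends π S' α β s = none ↔ ¬ (kF ends π S' s.1 (cond s.2 α β)).Nonempty := by
  constructor
  · intro h hne
    rw [kstep, dif_pos hne] at h
    exact nomatch h
  · intro h
    rw [kstep, dif_neg h]

lemma kstep_some {s t : V × Bool} (h : kstep ends π S' α β s = some t) :
    (kF ends π S' s.1 (cond s.2 α β)).Nonempty := by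
  by_contra hne
  rw [kstep, dif_neg hne] at h
  exact nomatch h

lemma kedge_some {s : V × Bool} {f : E} (h : kedge ends π S' α β s = some f) :
    f ∈ kF ends π S' s.1 (cond s.2 α β) := by
  by_cases hne : (kF ends π S' s.1 (cond s.2 α β)).Nonempty
  · rw [kedge, dif_pos hne] at h
    injection h with h
    exact h ▸ hne.choose_spec
  · rw [kedge, dif_neg hne] at h
    exact nomatch h

/-- two distinct members of a Sym2 pin down all members -/
lemma sym2_mem_eq {z : Sym2 V} {x y a : V} (hx : x ∈ z) (hy : y ∈ z) (hxy : x ≠ y)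
    (ha : a ∈ z) : a = x ∨ a = y := by
  have hz : z = s(x, y) := (Sym2.mem_and_mem_iff hxy).mp ⟨hx, hy⟩
  rw [hz] at ha
  exact Sym2.mem_iff.mp ha


def ProperOn (ends : E → Sym2 V) {k : ℕ} (S : Finset E) (π : E → Fin k) : Prop :=
  ∀ e₁ ∈ S, ∀ e₂ ∈ S, e₁ ≠ e₂ → (∃ v : V, v ∈ ends e₁ ∧ v ∈ ends e₂) → π e₁ ≠ π e₂

end KonigAux


def kswap {Δ : ℕ} (α β : Fin Δ) (c : Fin Δ) : Fin Δ :=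
  if c = α then β else if c = β then α else c

lemma kswap_invol {Δ : ℕ} (α β c : Fin Δ) : kswap α β (kswap α β c) = c := by
  unfold kswap
  split_ifs <;> simp_all

lemma kswap_inj {Δ : ℕ} (α β : Fin Δ) {c c' : Fin Δ} (h : kswap α β c = kswap α β c') :
    c = c' := by
  rw [← kswap_invol α β c, h, kswap_invol]

lemma kswap_left {Δ : ℕ} (α β : Fin Δ) : kswap α β α = β := by
  unfold kswap; simp

lemma kswap_right {Δ : ℕ} (α β : Fin Δ) : kswap α β β = α := by
  unfold kswap
  split_ifs with h1 h2
  · exact h1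
  · rfl
  · exact absurd rfl h2

section Extend
variable {V E : Type*} [DecidableEq V] [DecidableEq E] {Δ : ℕ}

lemma extendColoring [Fintype E]
    (ends : E → Sym2 V) (hloopless : ∀ e : E, ¬ (ends e).IsDiag)
    (A : Set V) (hbipartite : ∀ e : E, ∃ u w : V, ends e = s(u, w) ∧ u ∈ A ∧ w ∉ A)
    (hdeg : ∀ v, degree ends v ≤ Δ)
    (S' : Finset E) (e : E) (he : e ∉ S') {π : E → Fin Δ} (hπ : ProperOn ends S' π) :
    ∃ π' : E → Fin Δ, ProperOn ends (insert e S') π' := by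
  classical
  obtain ⟨u, w, huw, hu, hw⟩ := hbipartite e
  have hne_uw : u ≠ w := fun h => hw (h ▸ hu)
  have hue : u ∈ ends e := by rw [huw]; exact Sym2.mem_mk_left u w
  have hwe : w ∈ ends e := by rw [huw]; exact Sym2.mem_mk_right u w
  -- uniqueness of an edge of a given color at a vertex
  have huniq : ∀ v : V, ∀ f ∈ S', ∀ g ∈ S', v ∈ ends f → v ∈ ends g → π f = π g → f = g := by
    intro v f hf g hg hvf hvg hfg
    by_contra hne
    exact hπ f hf g hg hne ⟨v, hvf, hvg⟩ hfg
  -- missing colors at endpoints of e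
  have missing : ∀ v : V, v ∈ ends e → ∃ c : Fin Δ, ∀ f ∈ S', v ∈ ends f → π f ≠ c := by
    intro v hv
    by_contra hc
    push_neg at hc
    have h1 : ((S'.filter fun f => v ∈ ends f).image π) = Finset.univ := by
      apply Finset.eq_univ_iff_forall.mpr
      intro c
      obtain ⟨f, hf, hvf, hfc⟩ := hc c
      exact Finset.mem_image.mpr ⟨f, Finset.mem_filter.mpr ⟨hf, hvf⟩, hfc⟩
    have h2 : (S'.filter fun f => v ∈ ends f) ⊆ (edgeStar ends v).erase e := by
      intro f hf
      rw [Finset.mem_filter] at hf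
      exact Finset.mem_erase.mpr ⟨fun h => he (h ▸ hf.1),
        Finset.mem_filter.mpr ⟨Finset.mem_univ f, hf.2⟩⟩
    have h3 : Δ ≤ ((S'.filter fun f => v ∈ ends f).image π).card := by
      rw [h1, Finset.card_univ, Fintype.card_fin]
    have h4 := Finset.card_image_le (s := S'.filter fun f => v ∈ ends f) (f := π)
    have h5 := Finset.card_le_card h2
    have hve : e ∈ edgeStar ends v := Finset.mem_filter.mpr ⟨Finset.mem_univ e, hv⟩
    have h6 : ((edgeStar ends v).erase e).card = degree ends v - 1 :=
      Finset.card_erase_of_mem hve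
    have h7 : 1 ≤ degree ends v := Finset.card_pos.mpr ⟨e, hve⟩
    have h8 := hdeg v
    have h9 : degree ends v = (edgeStar ends v).card := rfl
    omega
  obtain ⟨αc, hα⟩ := missing u hue
  obtain ⟨βc, hβ⟩ := missing w hwe
  -- crossing lemma
  have cross : ∀ f : E, ∀ x y : V, x ∈ ends f → y ∈ ends f → x ≠ y → (x ∈ A ↔ y ∉ A) := by
    intro f x y hx hy hxy
    obtain ⟨p, q, hpq, hp, hq⟩ := hbipartite f
    have hpq' : p ≠ q := by
      intro h
      exact hloopless f (by rw [hpq, h]; exact Sym2.mk_isDiag_iff.mpr rfl)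
    rw [hpq] at hx hy
    rcases Sym2.mem_iff.mp hx with rfl | rfl <;> rcases Sym2.mem_iff.mp hy with rfl | rfl <;>
      first | exact absurd rfl hxy | tauto
  set wk := kwalk ends π S' αc βc w with hwk_def
  have hwk0 : wk 0 = some (w, true) := rfl
  have hwkS : ∀ n, wk (n + 1) = (wk n).bind (kstep ends π S' αc βc) := fun n => rfl
  -- parity invariant
  have parity : ∀ n x b, wk n = some (x, b) → (x ∈ A ↔ b = false) := by
    intro n
    induction n with
    | zero =>
      intro x b h
      rw [hwk0] at h
      injection h with h
      injection h with h1 h2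
      subst h1; subst h2
      simp [hw]
    | succ m ih =>
      intro x b h
      rw [hwkS] at h
      obtain ⟨s, hs, hst'⟩ := Option.bind_eq_some_iff.mp h
      obtain ⟨f, t, hedg, hstp, hfF, ht1, ht2, htne⟩ := kstep_pos (kstep_some hst')
      rw [hstp] at hst'
      injection hst' with hst'
      subst hst'
      have hs1 : s.1 ∈ ends f := (mem_kF.mp hfF).2.1
      have hxne : x ≠ s.1 := htne (hloopless f)
      have hcr := cross f x s.1 ht1 hs1 hxne
      have hih := ih s.1 s.2 (by rw [← hs])
      subst ht2
      rw [hcr]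
      cases hsb : s.2
      · rw [hsb] at hih
        simp [hih.mpr rfl]
      · rw [hsb] at hih
        have hna : s.1 ∉ A := fun h => by simpa using hih.mp h
        simp [hna]
  -- the walk never visits u
  have avoidu : ∀ n x b, wk n = some (x, b) → x ≠ u := by
    intro n
    cases n with
    | zero =>
      intro x b h
      rw [hwk0] at h
      injection h with h
      injection h with h1 _
      subst h1
      exact hne_uw.symm
    | succ m =>
      intro x b h
      intro hxu
      subst hxu
      have hb : b = false := (parity _ _ _ h).mp hu
      subst hb
      rw [hwkS] at h
      obtain ⟨s, hs, hst'⟩ := Option.bind_eq_some_iff.mp h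
      obtain ⟨f, t, hedg, hstp, hfF, ht1, ht2, htne⟩ := kstep_pos (kstep_some hst')
      rw [hstp] at hst'
      injection hst' with hst'
      subst hst'
      have hs2 : s.2 = true := by
        cases hs2 : s.2 <;> rw [hs2] at ht2 <;> simp_all
      have hcol : π f = αc := by
        have := (mem_kF.mp hfF).2.2
        rw [hs2] at this
        exact this
      exact hα f (mem_kF.mp hfF).1 ht1 hcol
  -- the set of walk edges
  set Wset : Finset E :=
    Finset.univ.filter (fun f => ∃ n s, wk n = some s ∧ kedge ends π S' αc βc s = some f) with hWset_def
  have memW : ∀ f : E, f ∈ Wset ↔ ∃ n s, wk n = some s ∧ kedge ends π S' αc βc s = some f := by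
    intro f
    rw [hWset_def, Finset.mem_filter]
    simp
  have Wspec : ∀ f ∈ Wset, f ∈ S' ∧ (π f = αc ∨ π f = βc) ∧
      (∀ z ∈ ends f, ∃ n x b, wk n = some (x, b) ∧ x = z) := by
    intro f hfW
    obtain ⟨n, s, hwkn, hedf⟩ := (memW f).mp hfW
    have hfF := kedge_some hedf
    have hne : (kF ends π S' s.1 (cond s.2 αc βc)).Nonempty := ⟨f, hfF⟩
    obtain ⟨f', t, hedg', hstp', hfF', ht1', ht2', htne'⟩ := kstep_pos hne
    have hff' : f = f' := by
      rw [hedg'] at hedf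
      exact (Option.some_injective _ hedf.symm)
    subst hff'
    refine ⟨(mem_kF.mp hfF).1, ?_, ?_⟩
    · have h := (mem_kF.mp hfF).2.2
      cases hsb : s.2
      · rw [hsb] at h
        exact Or.inr h
      · rw [hsb] at h
        exact Or.inl h
    · intro z hz
      have hs1 : s.1 ∈ ends f := (mem_kF.mp hfF).2.1
      have htne := htne' (hloopless f)
      have hwkn1 : wk (n + 1) = some t := by
        rw [hwkS, hwkn]
        exact hstp'
      rcases sym2_mem_eq ht1' hs1 htne hz with rfl | rfl
      · exact ⟨n + 1, t.1, t.2, by rw [hwkn1], rfl⟩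
      · exact ⟨n, s.1, s.2, by rw [hwkn], rfl⟩
  have hWu : ∀ f ∈ Wset, u ∉ ends f := by
    intro f hfW hu'
    obtain ⟨n, x, b, hwkn, hx⟩ := (Wspec f hfW).2.2 u hu'
    exact avoidu n x b hwkn hx
  -- every (α,β)-colored edge at a walk vertex is a walk edge
  have claimD : ∀ n x b, wk n = some (x, b) → ∀ g ∈ S', x ∈ ends g →
      (π g = αc ∨ π g = βc) → g ∈ Wset := by
    intro n x b hwkn g hg hxg hgc
    by_cases hcb : π g = cond b αc βc
    · have hne : (kF ends π S' x (cond b αc βc)).Nonempty :=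
        ⟨g, mem_kF.mpr ⟨hg, hxg, hcb⟩⟩
      obtain ⟨f, t, hedg, hstp, hfF, ht1, ht2, htne⟩ :=
        kstep_pos (s := ((x : V), b)) hne
      have : g = f := huniq x g hg f (mem_kF.mp hfF).1 hxg (mem_kF.mp hfF).2.1
        (hcb.trans (mem_kF.mp hfF).2.2.symm)
      exact (memW g).mpr ⟨n, (x, b), hwkn, this ▸ hedg⟩
    · have hgb : π g = cond (!b) αc βc := by
        cases b <;> simp at hcb ⊢ <;> tauto
      cases n with
      | zero =>
        rw [hwk0] at hwkn
        injection hwkn with hwkn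
        injection hwkn with h1 h2
        subst h1; subst h2
        simp at hgb
        exact absurd hgb (hβ g hg hxg)
      | succ m =>
        rw [hwkS] at hwkn
        obtain ⟨s, hs, hst'⟩ := Option.bind_eq_some_iff.mp hwkn
        obtain ⟨f, t, hedg, hstp, hfF, ht1, ht2, htne⟩ := kstep_pos (kstep_some hst')
        rw [hstp] at hst'
        injection hst' with hst'
        subst hst'
        have hs2 : s.2 = !b := by
          have : b = !s.2 := ht2
          cases hb : s.2 <;> rw [hb] at this <;> simp at this <;> simp [this]
        have hfcol : π f = cond (!b) αc βc := by
          have := (mem_kF.mp hfF).2.2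
          rw [hs2] at this
          exact this
        have hgf : g = f := huniq x g hg f (mem_kF.mp hfF).1 hxg ht1
          (hgb.trans hfcol.symm)
        exact (memW g).mpr ⟨m, s, hs, hgf ▸ hedg⟩
  -- the color swap
  have swapc_inj : ∀ c c' : Fin Δ, kswap αc βc c = kswap αc βc c' → c = c' :=
    fun c c' => kswap_inj αc βc
  have swapc_α : kswap αc βc αc = βc := kswap_left αc βc
  have swapc_β : kswap αc βc βc = αc := kswap_right αc βc
  -- the new coloring
  set π' : E → Fin Δ :=
    fun f => if f = e then αc else if f ∈ Wset then kswap αc βc (π f) else π f with hπ'_def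
  have hπ'e : π' e = αc := by rw [hπ'_def]; simp
  have hπ'W : ∀ f ∈ S', f ∈ Wset → π' f = kswap αc βc (π f) := by
    intro f hf hfW
    have hfe : f ≠ e := fun h => he (h ▸ hf)
    rw [hπ'_def]
    simp [hfe, hfW]
  have hπ'nW : ∀ f ∈ S', f ∉ Wset → π' f = π f := by
    intro f hf hfW
    have hfe : f ≠ e := fun h => he (h ▸ hf)
    rw [hπ'_def]
    simp [hfe, hfW]
  refine ⟨π', ?_⟩
  -- key fact: no edge of S' sharing a vertex with e gets color αc
  have key : ∀ g ∈ S', (∃ v : V, v ∈ ends e ∧ v ∈ ends g) → π' g ≠ αc := by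
    intro g hg ⟨v, hve, hvg⟩ hcon
    have hvuw : v = u ∨ v = w := by
      rw [huw] at hve
      exact Sym2.mem_iff.mp hve
    by_cases hgW : g ∈ Wset
    · rw [hπ'W g hg hgW] at hcon
      rcases (Wspec g hgW).2.1 with hgα | hgβ
      · rw [hgα, swapc_α] at hcon
        -- βc = αc, so π g = αc = βc
        rcases hvuw with h | h
        · have hug : u ∈ ends g := by rw [← h]; exact hvg
          exact hα g hg hug hgα
        · have hwg : w ∈ ends g := by rw [← h]; exact hvg
          exact hβ g hg hwg (hgα.trans hcon.symm)
      · rw [hgβ, swapc_β] at hcon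
        rcases hvuw with h | h
        · have hug : u ∈ ends g := by rw [← h]; exact hvg
          exact hWu g hgW hug
        · have hwg : w ∈ ends g := by rw [← h]; exact hvg
          exact hβ g hg hwg hgβ
    · rw [hπ'nW g hg hgW] at hcon
      rcases hvuw with h | h
      · have hug : u ∈ ends g := by rw [← h]; exact hvg
        exact hα g hg hug hcon
      · have hwg : w ∈ ends g := by rw [← h]; exact hvg
        exact hgW (claimD 0 w true hwk0 g hg hwg (Or.inl hcon))
  -- mixed case helper
  have mix : ∀ f ∈ S', f ∈ Wset → ∀ g ∈ S', g ∉ Wset →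
      (∃ v : V, v ∈ ends f ∧ v ∈ ends g) → π' f ≠ π' g := by
    intro f hf hfW g hg hgW ⟨v, hvf, hvg⟩ hcon
    rw [hπ'W f hf hfW, hπ'nW g hg hgW] at hcon
    have hπg : π g = αc ∨ π g = βc := by
      rcases (Wspec f hfW).2.1 with hfα | hfβ
      · rw [hfα, swapc_α] at hcon
        exact Or.inr hcon.symm
      · rw [hfβ, swapc_β] at hcon
        exact Or.inl hcon.symm
    obtain ⟨n, x, b, hwkn, rfl⟩ := (Wspec f hfW).2.2 v hvf
    exact hgW (claimD n _ b hwkn g hg hvg hπg)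
  intro f hf g hg hfg hshare
  rcases Finset.mem_insert.mp hf with rfl | hf' <;>
    rcases Finset.mem_insert.mp hg with rfl | hg'
  · exact absurd rfl hfg
  · rw [hπ'e]
    obtain ⟨v, hv1, hv2⟩ := hshare
    exact fun h => key g hg' ⟨v, hv1, hv2⟩ (h ▸ rfl)
  · rw [hπ'e]
    obtain ⟨v, hv1, hv2⟩ := hshare
    exact fun h => key f hf' ⟨v, hv2, hv1⟩ h
  · by_cases hfW : f ∈ Wset <;> by_cases hgW : g ∈ Wset
    · rw [hπ'W f hf' hfW, hπ'W g hg' hgW]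
      exact fun h => hπ f hf' g hg' hfg hshare (swapc_inj _ _ h)
    · exact mix f hf' hfW g hg' hgW hshare
    · obtain ⟨v, hv1, hv2⟩ := hshare
      exact fun h => mix g hg' hgW f hf' hfW ⟨v, hv2, hv1⟩ h.symm
    · rw [hπ'nW f hf' hfW, hπ'nW g hg' hgW]
      exact hπ f hf' g hg' hfg hshare

end Extend


/-- **Kőnig's edge-coloring theorem.** For a bipartite multigraph `G`, the edge-coloring
number `χ(G)` (the least number of colors in a proper edge-coloring) equals the maximum
degree `Δ(G)`. -/
theorem konig_edge_coloring
    {V E : Type*} [Fintype V] [Fintype E] [DecidableEq V] [DecidableEq E]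
    (ends : E → Sym2 V) (hloopless : ∀ e : E, ¬ (ends e).IsDiag)
    (A : Set V)
    (hbipartite : ∀ e : E, ∃ u w : V, ends e = s(u, w) ∧ u ∈ A ∧ w ∉ A) :
    sInf {k : ℕ | ∃ π : E → Fin k, IsProperEdgeColoring ends π} = maxDegree V E ends := by
  classical
  set Δ := maxDegree V E ends with hΔ
  have hdeg : ∀ v, degree ends v ≤ Δ := fun v => Finset.le_sup (Finset.mem_univ v)
  have hnon : {k : ℕ | ∃ π : E → Fin k, IsProperEdgeColoring ends π}.Nonempty := by
    refine ⟨Fintype.card E, fun f => (Fintype.equivFin E) f, ?_⟩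
    intro e₁ e₂ hne _
    exact fun h => hne ((Fintype.equivFin E).injective h)
  apply le_antisymm
  · apply Nat.sInf_le
    by_cases hE : IsEmpty E
    · exact ⟨fun f => isEmptyElim f, fun e₁ => isEmptyElim e₁⟩
    · have hne : Nonempty E := not_isEmpty_iff.mp hE
      obtain ⟨e0⟩ := hne
      obtain ⟨u0, w0, h0, _, _⟩ := hbipartite e0
      have hΔpos : 0 < Δ := by
        have h1 : 1 ≤ degree ends u0 := Finset.card_pos.mpr
          ⟨e0, Finset.mem_filter.mpr ⟨Finset.mem_univ e0, by rw [h0]; exact Sym2.mem_mk_left u0 w0⟩⟩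
        exact lt_of_lt_of_le Nat.zero_lt_one (h1.trans (hdeg u0))
      have main : ∀ S : Finset E, ∃ π : E → Fin Δ, ProperOn ends S π := by
        intro S
        induction S using Finset.induction_on with
        | empty =>
          exact ⟨fun _ => ⟨0, hΔpos⟩, fun a ha => absurd ha (Finset.notMem_empty a)⟩
        | @insert a S ha ih =>
          obtain ⟨π, hπ⟩ := ih
          exact extendColoring ends hloopless A hbipartite hdeg S a ha hπ
      obtain ⟨π, hπ⟩ := main Finset.univ
      exact ⟨π, fun e₁ e₂ hne12 hsh =>
        hπ e₁ (Finset.mem_univ _) e₂ (Finset.mem_univ _) hne12 hsh⟩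
  · apply le_csInf hnon
    rintro k ⟨π, hπ⟩
    rw [hΔ]
    apply Finset.sup_le
    intro v _
    have hc : (edgeStar ends v).card ≤ (Finset.univ : Finset (Fin k)).card := by
      apply Finset.card_le_card_of_injOn π (fun a _ => Finset.mem_univ _)
      intro a ha b hb hab
      by_contra hne
      have hva : v ∈ ends a := (Finset.mem_filter.mp (Finset.mem_coe.mp ha)).2
      have hvb : v ∈ ends b := (Finset.mem_filter.mp (Finset.mem_coe.mp hb)).2
      exact hπ a b hne ⟨v, hva, hvb⟩ hab
    simpa [degree] using hc
end

section
/- For any multigraph G = (V,E), the edge-coloring number satisfies Δ(G) ≤ χ(G) ≤ Δ(G) + μ(G). -/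
open Finset
set_option linter.unusedSectionVars false
set_option maxHeartbeats 1000000

/-- The edgeMultiplicity `μ(G)`: the maximum number of edges between any pair of two
vertices of the multigraph. -/
def edgeMultiplicity (V E : Type*) [Fintype V] [Fintype E] [DecidableEq V] [DecidableEq E]
    (ends : E → Sym2 V) : ℕ :=
  Finset.univ.sup (fun p : V × V =>
    if p.1 ≠ p.2 then (Finset.univ.filter (fun e => ends e = s(p.1, p.2))).card else 0)

namespace Viz

variable {V E : Type*} [Fintype V] [Fintype E] [DecidableEq V] [DecidableEq E]
variable {k : ℕ} (ends : E → Sym2 V)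

/-- Proper partial edge colorings. -/
def Proper (π : E → Option (Fin k)) : Prop :=
  ∀ e₁ e₂ : E, ∀ v : V, ∀ c : Fin k, e₁ ≠ e₂ → v ∈ ends e₁ → v ∈ ends e₂ →
    π e₁ = some c → π e₂ ≠ some c

/-- Colors free (missing) at a vertex. -/
def free (π : E → Option (Fin k)) (v : V) : Finset (Fin k) :=
  Finset.univ.filter (fun c => ∀ e, v ∈ ends e → π e ≠ some c)

variable {ends}

lemma sym2_exists_rep (z : Sym2 V) : ∃ p q : V, z = s(p, q) :=
  Sym2.ind (f := fun z => ∃ p q : V, z = s(p, q)) (fun p q => ⟨p, q, rfl⟩) z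

lemma mem_free {π : E → Option (Fin k)} {v : V} {c : Fin k} :
    c ∈ free ends π v ↔ ∀ e, v ∈ ends e → π e ≠ some c := by
  simp [free]

lemma card_notfree (π : E → Option (Fin k)) (v : V) :
    (Finset.univ \ free ends π v).card
      ≤ ((edgeStar ends v).filter (fun e => (π e).isSome)).card := by
  classical
  have hsub : (Finset.univ \ free ends π v).image some
      ⊆ ((edgeStar ends v).filter (fun e => (π e).isSome)).image π := by
    intro o ho
    simp only [mem_image, mem_sdiff, mem_free] at ho
    obtain ⟨c, ⟨-, hc⟩, rfl⟩ := ho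
    push_neg at hc
    obtain ⟨e, he, hpe⟩ := hc
    exact mem_image.2 ⟨e, by simp [edgeStar, he, hpe], hpe⟩
  calc (Finset.univ \ free ends π v).card
      = ((Finset.univ \ free ends π v).image some).card :=
        (Finset.card_image_of_injective _ (Option.some_injective _)).symm
    _ ≤ (((edgeStar ends v).filter (fun e => (π e).isSome)).image π).card :=
        Finset.card_le_card hsub
    _ ≤ _ := Finset.card_image_le


lemma le_card_free_add_degree (π : E → Option (Fin k)) (v : V) :
    k ≤ (free ends π v).card + degree ends v := by
  classical
  have h1 := card_notfree (ends := ends) π v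
  have h2 : ((edgeStar ends v).filter (fun e => (π e).isSome)).card ≤ degree ends v :=
    Finset.card_le_card (Finset.filter_subset _ _)
  have h3 : (Finset.univ \ free ends π v).card + (free ends π v).card = k := by
    rw [Finset.card_sdiff_add_card_eq_card (Finset.subset_univ _)]
    simp
  omega

lemma le_card_free_add_degree_of_uncolored (π : E → Option (Fin k)) (v : V) (e' : E)
    (he' : v ∈ ends e') (hpe' : π e' = none) :
    k + 1 ≤ (free ends π v).card + degree ends v := by
  classical
  have h1 := card_notfree (ends := ends) π v
  have h2 : ((edgeStar ends v).filter (fun e => (π e).isSome)).card + 1 ≤ degree ends v := by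
    have hsub : (edgeStar ends v).filter (fun e => (π e).isSome) ⊆ (edgeStar ends v).erase e' := by
      intro e he
      simp only [Finset.mem_filter] at he
      refine Finset.mem_erase.2 ⟨?_, he.1⟩
      rintro rfl
      rw [hpe'] at he
      simp at he
    have := Finset.card_le_card hsub
    have he'' : e' ∈ edgeStar ends v := by simp [edgeStar, he']
    have := Finset.card_erase_add_one he''
    unfold degree
    omega
  have h3 : (Finset.univ \ free ends π v).card + (free ends π v).card = k := by
    rw [Finset.card_sdiff_add_card_eq_card (Finset.subset_univ _)]
    simp
  omega

section Fan

variable (ends) in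
/-- `π'` extends the support of `π` and colors `e0`. -/
def Extends (π : E → Option (Fin k)) (e0 : E) : Prop :=
  ∃ π' : E → Option (Fin k), Proper ends π' ∧ (∀ e, π e ≠ none → π' e ≠ none) ∧ π' e0 ≠ none

lemma proper_update {π : E → Option (Fin k)} {x w : V} {e' : E} {γ : Fin k}
    (hprop : Proper ends π) (hends : ends e' = s(x, w))
    (hx : γ ∈ free ends π x) (hw : γ ∈ free ends π w) :
    Proper ends (Function.update π e' (some γ)) := by
  intro e₁ e₂ v c hne hv1 hv2 h1 h2
  by_cases h1e : e₁ = e'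
  · subst h1e
    rw [Function.update_self] at h1
    obtain rfl : γ = c := by simpa using h1
    have hv : v = x ∨ v = w := by rw [hends] at hv1; simpa using hv1
    rw [Function.update_of_ne (fun hh => hne hh.symm)] at h2
    rcases hv with rfl | rfl
    · exact (mem_free.1 hx e₂ hv2) h2
    · exact (mem_free.1 hw e₂ hv2) h2
  · rw [Function.update_of_ne h1e] at h1
    by_cases h2e : e₂ = e'
    · subst h2e
      rw [Function.update_self] at h2
      obtain rfl : γ = c := by simpa using h2
      have hv : v = x ∨ v = w := by rw [hends] at hv2; simpa using hv2
      rcases hv with rfl | rfl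
      · exact (mem_free.1 hx e₁ hv1) h1
      · exact (mem_free.1 hw e₁ hv1) h1
    · rw [Function.update_of_ne h2e] at h2
      exact hprop e₁ e₂ v c hne hv1 hv2 h1 h2

lemma mem_free_update_of_ne {π : E → Option (Fin k)} {w : V} {e' : E} {γ c' : Fin k}
    (h : c' ≠ γ) (hc : c' ∈ free ends π w) :
    c' ∈ free ends (Function.update π e' (some γ)) w := by
  rw [mem_free] at hc ⊢
  intro e he
  rcases eq_or_ne e e' with rfl | hee
  · rw [Function.update_self]
    simpa using fun hh => h hh.symm
  · rw [Function.update_of_ne hee]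
    exact hc e he

lemma extends_mono {π π₂ : E → Option (Fin k)} {e0 : E}
    (h : ∀ e, π e ≠ none → π₂ e ≠ none) : Extends ends π₂ e0 → Extends ends π e0 := by
  rintro ⟨π', h1, h2, h3⟩
  exact ⟨π', h1, fun e he => h2 e (h e he), h3⟩

variable (ends) in
/-- A (multi)fan at a vertex `x` with uncolored edge `e0 = f 0`. -/
structure IsFan (π : E → Option (Fin k)) (x : V) (e0 : E) (n : ℕ) (f : ℕ → E) (y : ℕ → V) :
    Prop where
  base : f 0 = e0
  ends_eq : ∀ i, i ≤ n → ends (f i) = s(x, y i)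
  inj : ∀ i j, i ≤ n → j ≤ n → f i = f j → i = j
  parent : ∀ i, 1 ≤ i → i ≤ n → ∃ c m, m < i ∧ π (f i) = some c ∧ c ∈ free ends π (y m)

/-- FACT A: in a stuck coloring no color is free at both `x` and a fan vertex. -/
lemma fan_fact_a {x : V} {e0 : E}
    (hloop : ∀ e : E, ¬ (ends e).IsDiag) :
    ∀ (i : ℕ) (π : E → Option (Fin k)) (n : ℕ) (f : ℕ → E) (y : ℕ → V),
    Proper ends π → π e0 = none → ¬ Extends ends π e0 →
    IsFan ends π x e0 n f y → i ≤ n → ∀ γ : Fin k,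
    γ ∈ free ends π x → γ ∈ free ends π (y i) → False := by
  intro i
  induction i using Nat.strong_induction_on with
  | _ i IH =>
  intro π n f y hprop h0 hstuck hfan hin γ hγx hγy
  have hends0 : ends e0 = s(x, y 0) := hfan.base ▸ hfan.ends_eq 0 (Nat.zero_le n)
  rcases Nat.eq_zero_or_pos i with rfl | hipos
  · -- base case: color e0 with γ directly
    refine hstuck ⟨Function.update π e0 (some γ), proper_update hprop hends0 hγx hγy, ?_, ?_⟩
    · intro e he
      by_cases hee : e = e0
      · subst hee; simp
      · rwa [Function.update_of_ne hee]
    · simp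
  · -- inductive step
    obtain ⟨c, m, hm, hc, hcm⟩ := hfan.parent i hipos hin
    have hxyi : x ∈ ends (f i) ∧ y i ∈ ends (f i) := by
      rw [hfan.ends_eq i hin]; simp
    have hxym : x ∈ ends (f m) ∧ y m ∈ ends (f m) := by
      rw [hfan.ends_eq m (le_trans (le_of_lt (lt_of_lt_of_le hm hin)) le_rfl)]; simp
    have hγc : γ ≠ c := by
      rintro rfl
      exact (mem_free.1 hγx (f i) hxyi.1) hc
    have hymyi : y m ≠ y i := by
      rintro hmi
      rw [hmi] at hcm
      exact (mem_free.1 hcm (f i) hxyi.2) hc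
    set π' := Function.update π (f i) (some γ) with hπ'
    have hprop' : Proper ends π' :=
      proper_update hprop (hfan.ends_eq i hin) hγx hγy
    have hf0i : f 0 ≠ f i := by
      intro hh
      exact absurd (hfan.inj 0 i (Nat.zero_le n) hin hh) (by omega)
    have h0' : π' e0 = none := by
      rw [hπ', ← hfan.base, Function.update_of_ne hf0i, hfan.base, h0]
    have hsupp : ∀ e, π e ≠ none → π' e ≠ none := by
      intro e he
      by_cases hee : e = f i
      · subst hee; simp [hπ']
      · rwa [hπ', Function.update_of_ne hee]
    have hstuck' : ¬ Extends ends π' e0 := fun h => hstuck (extends_mono hsupp h)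
    have hfan' : IsFan ends π' x e0 m f y := by
      refine ⟨hfan.base, fun l hl => hfan.ends_eq l (le_trans hl (by omega)),
        fun a b ha hb => hfan.inj a b (le_trans ha (by omega)) (le_trans hb (by omega)), ?_⟩
      intro l hl1 hl2
      obtain ⟨c', m', hm', hcl, hfree⟩ := hfan.parent l hl1 (le_trans hl2 (by omega))
      have hfl : f l ≠ f i := by
        intro hh
        have := hfan.inj l i (le_trans hl2 (by omega)) hin hh
        omega
      refine ⟨c', m', hm', by rwa [hπ', Function.update_of_ne hfl], ?_⟩
      have hc'γ : c' ≠ γ := by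
        rintro rfl
        have hxl : x ∈ ends (f l) := by
          rw [hfan.ends_eq l (le_trans hl2 (by omega))]; simp
        exact (mem_free.1 hγx (f l) hxl) hcl
      exact mem_free_update_of_ne hc'γ hfree
    have hcx' : c ∈ free ends π' x := by
      rw [mem_free]
      intro e he
      by_cases hee : e = f i
      · subst hee
        rw [hπ', Function.update_self]
        simpa using fun hh => hγc hh
      · rw [hπ', Function.update_of_ne hee]
        exact hprop (f i) e x c (fun hh => hee hh.symm) hxyi.1 he hc
    have hcy' : c ∈ free ends π' (y m) := by
      have hcy : c ∈ free ends π (y m) := hcm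
      exact mem_free_update_of_ne (fun hh => hγc hh.symm) hcy
    exact IH m hm π' m f y hprop' h0' hstuck' hfan' le_rfl c hcx' hcy'

end Fan


section Kempe

variable (ends) in
def KRel (π : E → Option (Fin k)) (α β : Fin k) (e e' : E) : Prop :=
  (π e = some α ∨ π e = some β) ∧ (π e' = some α ∨ π e' = some β) ∧
    ∃ v, v ∈ ends e ∧ v ∈ ends e'

variable (ends) in
def Reach (π : E → Option (Fin k)) (α β : Fin k) (g e : E) : Prop :=
  Relation.ReflTransGen (KRel ends π α β) g e

def swapColor (α β : Fin k) (c : Option (Fin k)) : Option (Fin k) :=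
  if c = some α then some β else if c = some β then some α else c

open scoped Classical in
variable (ends) in
noncomputable def kswap (π : E → Option (Fin k)) (α β : Fin k) (g : E) :
    E → Option (Fin k) := fun e =>
  if Reach ends π α β g e then swapColor α β (π e) else π e

variable {π : E → Option (Fin k)} {α β : Fin k} {g : E}

lemma krel_symm : Symmetric (KRel ends π α β) := by
  rintro e e' ⟨h1, h2, v, hv1, hv2⟩
  exact ⟨h2, h1, v, hv2, hv1⟩

lemma reach_symm (h : Reach ends π α β g e) : Reach ends π α β e g :=
  by haveI : Std.Symm (KRel ends π α β) := ⟨fun _ _ h => krel_symm h⟩; exact Std.Symm.symm (r := Relation.ReflTransGen (KRel ends π α β)) _ _ h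

lemma reach_trans {e e' : E} (h : Reach ends π α β g e) (h' : Reach ends π α β e e') :
    Reach ends π α β g e' := Relation.ReflTransGen.trans h h'

lemma reach_ab (hg : π g = some α ∨ π g = some β) (h : Reach ends π α β g e) :
    π e = some α ∨ π e = some β := by
  induction h with
  | refl => exact hg
  | tail _ hrel _ => exact hrel.2.1

lemma reach_single (hg : π g = some α ∨ π g = some β)
    (he : π e = some α ∨ π e = some β) {v : V} (hvg : v ∈ ends g) (hve : v ∈ ends e) :
    Reach ends π α β g e :=
  Relation.ReflTransGen.single ⟨hg, he, v, hvg, hve⟩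

lemma kswap_eq_of_not_reach (h : ¬ Reach ends π α β g e) : kswap ends π α β g e = π e :=
  if_neg h

lemma kswap_none_iff (e : E) : kswap ends π α β g e = none ↔ π e = none := by
  unfold kswap swapColor
  split
  · split
    · simp_all
    · split <;> simp_all
  · rfl

lemma kswap_proper (hαβ : α ≠ β) (hprop : Proper ends π)
    (hg : π g = some α ∨ π g = some β) : Proper ends (kswap ends π α β g) := by
  intro e₁ e₂ v c hne hv1 hv2 h1 h2
  unfold kswap at h1 h2
  by_cases hr1 : Reach ends π α β g e₁ <;> by_cases hr2 : Reach ends π α β g e₂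
  · rw [if_pos hr1] at h1
    rw [if_pos hr2] at h2
    have hab1 := reach_ab hg hr1
    have hab2 := reach_ab hg hr2
    have hv : swapColor α β (π e₁) = swapColor α β (π e₂) := h1.trans h2.symm
    have heq : π e₁ = π e₂ := by
      unfold swapColor at hv
      rcases hab1 with h | h <;> rcases hab2 with h' | h' <;>
        rw [h, h'] at hv ⊢ <;> simp_all
    rcases hab1 with h | h
    · exact hprop e₁ e₂ v α hne hv1 hv2 h (heq.symm.trans h)
    · exact hprop e₁ e₂ v β hne hv1 hv2 h (heq.symm.trans h)
  · rw [if_pos hr1] at h1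
    rw [if_neg hr2] at h2
    have hab1 := reach_ab hg hr1
    have hab2 : π e₂ = some α ∨ π e₂ = some β := by
      unfold swapColor at h1
      rcases hab1 with h | h <;> simp_all
    exact hr2 (reach_trans hr1 (reach_single hab1 hab2 hv1 hv2))
  · rw [if_neg hr1] at h1
    rw [if_pos hr2] at h2
    have hab2 := reach_ab hg hr2
    have hab1 : π e₁ = some α ∨ π e₁ = some β := by
      unfold swapColor at h2
      rcases hab2 with h | h <;> simp_all
    exact hr1 (reach_trans hr2 (reach_single hab2 hab1 hv2 hv1))
  · rw [if_neg hr1] at h1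
    rw [if_neg hr2] at h2
    exact hprop e₁ e₂ v c hne hv1 hv2 h1 h2

lemma mem_free_kswap_of_ne {c : Fin k} {v : V} (hcα : c ≠ α) (hcβ : c ≠ β) :
    (c ∈ free ends (kswap ends π α β g) v ↔ c ∈ free ends π v) := by
  rw [mem_free, mem_free]
  have key : ∀ e : E, kswap ends π α β g e = some c ↔ π e = some c := by
    intro e
    unfold kswap swapColor
    by_cases hr : Reach ends π α β g e
    · rw [if_pos hr]
      by_cases h1 : π e = some α
      · rw [if_pos h1, h1]
        simp only [Option.some.injEq]
        exact ⟨fun h => absurd h.symm hcβ, fun h => absurd h.symm hcα⟩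
      · rw [if_neg h1]
        by_cases h2 : π e = some β
        · rw [if_pos h2, h2]
          simp only [Option.some.injEq]
          exact ⟨fun h => absurd h.symm hcα, fun h => absurd h.symm hcβ⟩
        · rw [if_neg h2]
    · rw [if_neg hr]
  constructor
  · intro h e he hc
    exact h e he ((key e).2 hc)
  · intro h e he hc
    exact h e he ((key e).1 hc)

lemma free_kswap_untouched {v : V} (h : ∀ e, v ∈ ends e → ¬ Reach ends π α β g e) :
    free ends (kswap ends π α β g) v = free ends π v := by
  ext c
  rw [mem_free, mem_free]
  constructor <;> intro hh e he <;>
    [ (rw [← kswap_eq_of_not_reach (h e he)]; exact hh e he);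
      (rw [kswap_eq_of_not_reach (h e he)]; exact hh e he)]

lemma alpha_free_kswap (hαβ : α ≠ β) {v : V} (hg : π g = some α ∨ π g = some β)
    (hgv : v ∈ ends g) (hβ : β ∈ free ends π v) :
    α ∈ free ends (kswap ends π α β g) v := by
  rw [mem_free]
  intro e he
  unfold kswap swapColor
  by_cases hr : Reach ends π α β g e
  · rw [if_pos hr]
    have hab := reach_ab hg hr
    rcases hab with h | h
    · rw [if_pos h]
      simp only [Ne, Option.some.injEq]
      exact fun hh => hαβ hh.symm
    · exact absurd h (mem_free.1 hβ e he)
  · rw [if_neg hr]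
    intro hc
    exact hr (reach_single hg (Or.inl hc) hgv he)

end Kempe


section Counting

variable (R : E → E → Prop)

def stepN (g : E) : ℕ → E → Prop
  | 0, e => e = g
  | n+1, e => ∃ e', stepN g n e' ∧ R e' e

lemma rtg_imp_stepN {g e : E} (h : Relation.ReflTransGen R g e) :
    ∃ n, stepN R g n e := by
  induction h with
  | refl => exact ⟨0, rfl⟩
  | tail _ hrel ih =>
    obtain ⟨n, hn⟩ := ih
    exact ⟨n + 1, _, hn, hrel⟩

variable (ends) in
def vertexSet (C : Finset E) : Finset V :=
  Finset.univ.filter (fun v => ∃ e ∈ C, v ∈ ends e)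

lemma conn_card (hloop : ∀ e : E, ¬ (ends e).IsDiag)
    (hR : ∀ e e', R e e' → ∃ v : V, v ∈ ends e ∧ v ∈ ends e') :
    ∀ (n : ℕ) (C : Finset E) (g : E), g ∈ C → C.card = n →
    (∀ e ∈ C, Relation.ReflTransGen (fun a b => a ∈ C ∧ b ∈ C ∧ R a b) g e) →
    (vertexSet ends C).card ≤ n + 1 := by
  classical
  intro n
  induction n using Nat.strong_induction_on with
  | _ n IH =>
  intro C g hg hcard hreach
  rcases Nat.lt_or_ge n 2 with hn2 | hn2
  · -- n ≤ 1 : C = {g}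
    interval_cases n
    · rw [Finset.card_eq_zero] at hcard
      subst hcard
      exact absurd hg (by simp)
    · have hC : C = {g} := by
        rw [Finset.card_eq_one] at hcard
        obtain ⟨a, rfl⟩ := hcard
        simp only [Finset.mem_singleton] at hg
        rw [hg]
      subst hC
      obtain ⟨p, q, hpq⟩ := sym2_exists_rep (ends g)
      have hsub : vertexSet ends ({g} : Finset E) ⊆ {p, q} := by
        intro v hv
        simp only [vertexSet, Finset.mem_filter, Finset.mem_singleton] at hv
        obtain ⟨-, e, rfl, hve⟩ := hv
        rw [hpq] at hve
        simpa using hve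
      calc (vertexSet ends ({g} : Finset E)).card ≤ ({p, q} : Finset V).card :=
            Finset.card_le_card hsub
        _ ≤ 2 := Finset.card_insert_le _ _ |>.trans (by simp)
  · -- n ≥ 2
    set R' := fun a b => a ∈ C ∧ b ∈ C ∧ R a b with hR'
    have hex : ∀ e ∈ C, ∃ m, stepN R' g m e := fun e he => rtg_imp_stepN R' (hreach e he)
    set d : E → ℕ := fun e => if h : ∃ m, stepN R' g m e then Nat.find h else 0 with hd
    have hdspec : ∀ e ∈ C, stepN R' g (d e) e := by
      intro e he
      rw [hd]
      simp only
      rw [dif_pos (hex e he)]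
      exact Nat.find_spec (hex e he)
    have hdle : ∀ (e : E) (m : ℕ), stepN R' g m e → d e ≤ m := by
      intro e m hm
      rw [hd]
      simp only
      rw [dif_pos ⟨m, hm⟩]
      exact Nat.find_le hm
    have hdg : d g = 0 := Nat.le_zero.mp (hdle g 0 rfl)
    obtain ⟨emax, hemax, hmax⟩ := Finset.exists_max_image C d ⟨g, hg⟩
    have hne_g : ∃ e ∈ C, e ≠ g := by
      have := Finset.one_lt_card.mp (by omega : 1 < C.card)
      obtain ⟨a, ha, b, hb, hab⟩ := this
      rcases eq_or_ne a g with rfl | h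
      · exact ⟨b, hb, fun hh => hab hh.symm⟩
      · exact ⟨a, ha, h⟩
    have hMpos : 1 ≤ d emax := by
      obtain ⟨e, he, hneg⟩ := hne_g
      have h1 : 1 ≤ d e := by
        rcases Nat.eq_zero_or_pos (d e) with h0 | h
        · have := hdspec e he
          rw [h0] at this
          exact absurd this hneg
        · exact h
      exact le_trans h1 (hmax e he)
    have hemaxg : emax ≠ g := fun hh => by rw [hh, hdg] at hMpos; omega
    set C' := C.erase emax with hC'
    have hkey : ∀ m, ∀ e ∈ C, e ≠ emax → d e = m →
        Relation.ReflTransGen (fun a b => a ∈ C' ∧ b ∈ C' ∧ R a b) g e := by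
      intro m
      induction m using Nat.strong_induction_on with
      | _ m IH2 =>
      intro e he hene hdm
      have hstep := hdspec e he
      rw [hdm] at hstep
      match m, hstep with
      | 0, hstep => rw [hstep]
      | m'+1, ⟨e', he', hrel⟩ =>
        have he'C : e' ∈ C := hrel.1
        have hde' : d e' ≤ m' := hdle e' m' he'
        have he'ne : e' ≠ emax := by
          intro hh
          have := hmax e he
          rw [← hh] at this
          omega
        have ih := IH2 (d e') (by omega) e' he'C he'ne rfl
        exact ih.tail ⟨Finset.mem_erase.2 ⟨he'ne, he'C⟩,
          Finset.mem_erase.2 ⟨hene, hrel.2.1⟩, hrel.2.2⟩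
    have hgC' : g ∈ C' := Finset.mem_erase.2 ⟨hemaxg.symm, hg⟩
    have hcard' : C'.card = n - 1 := by rw [hC', Finset.card_erase_of_mem hemax, hcard]
    have hIH := IH (n-1) (by omega) C' g hgC' hcard'
      (fun e he => hkey (d e) e (Finset.mem_of_mem_erase he) (Finset.ne_of_mem_erase he) rfl)
    -- emax shares a vertex with some edge of C'
    obtain ⟨m', hm⟩ : ∃ m', d emax = m' + 1 := ⟨d emax - 1, by omega⟩
    have hstep' : stepN R' g (m' + 1) emax := hm ▸ hdspec emax hemax
    obtain ⟨e'', he''step, hrel''⟩ := hstep'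
    have he''C : e'' ∈ C := hrel''.1
    have he''ne : e'' ≠ emax := by
      intro hh
      have h1 : d e'' ≤ m' := hdle e'' m' he''step
      rw [hh, hm] at h1
      omega
    obtain ⟨w, hw1, hw2⟩ := hR e'' emax hrel''.2.2
    obtain ⟨p, q, hpq⟩ := sym2_exists_rep (ends emax)
    have hwpq : w = p ∨ w = q := by rw [hpq] at hw2; simpa using hw2
    -- the other endpoint
    have hsub : ∀ z : V, w = p ∧ z = q ∨ w = q ∧ z = p →
        vertexSet ends C ⊆ insert z (vertexSet ends C') := by
      rintro z hz v hv
      simp only [vertexSet, Finset.mem_filter, Finset.mem_univ, true_and] at hv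
      obtain ⟨e, heC, hve⟩ := hv
      rcases eq_or_ne e emax with rfl | hene
      · rw [hpq] at hve
        rcases (by simpa using hve : v = p ∨ v = q) with rfl | rfl
        · rcases hz with ⟨hw, hzz⟩ | ⟨hw, hzz⟩
          · subst hw
            refine Finset.mem_insert_of_mem ?_
            simp only [vertexSet, Finset.mem_filter, Finset.mem_univ, true_and]
            exact ⟨e'', Finset.mem_erase.2 ⟨he''ne, he''C⟩, hw1⟩
          · subst hzz
            exact Finset.mem_insert_self _ _
        · rcases hz with ⟨hw, hzz⟩ | ⟨hw, hzz⟩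
          · subst hzz
            exact Finset.mem_insert_self _ _
          · subst hw
            refine Finset.mem_insert_of_mem ?_
            simp only [vertexSet, Finset.mem_filter, Finset.mem_univ, true_and]
            exact ⟨e'', Finset.mem_erase.2 ⟨he''ne, he''C⟩, hw1⟩
      · refine Finset.mem_insert_of_mem ?_
        simp only [vertexSet, Finset.mem_filter, Finset.mem_univ, true_and]
        exact ⟨e, Finset.mem_erase.2 ⟨hene, heC⟩, hve⟩
    have hfinal : (vertexSet ends C).card ≤ (vertexSet ends C').card + 1 := by
      rcases hwpq with hw | hw
      · calc (vertexSet ends C).card ≤ (insert q (vertexSet ends C')).card :=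
              Finset.card_le_card (hsub q (Or.inl ⟨hw, rfl⟩))
          _ ≤ _ := Finset.card_insert_le _ _
      · calc (vertexSet ends C).card ≤ (insert p (vertexSet ends C')).card :=
              Finset.card_le_card (hsub p (Or.inr ⟨hw, rfl⟩))
          _ ≤ _ := Finset.card_insert_le _ _
    omega

end Counting


section KCount

open scoped Classical

variable {π : E → Option (Fin k)} {α β : Fin k} {g : E}

lemma two_endpoints (hloop : ∀ e : E, ¬ (ends e).IsDiag) (e : E) :
    (Finset.univ.filter (fun v : V => v ∈ ends e)).card = 2 := by
  obtain ⟨p, q, hpq⟩ := sym2_exists_rep (ends e)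
  have hpq' : p ≠ q := fun h => hloop e (by rw [hpq]; exact Sym2.mk_isDiag_iff.2 h)
  have heq : Finset.univ.filter (fun v : V => v ∈ ends e) = {p, q} := by
    ext v
    simp [hpq, Sym2.mem_iff]
  rw [heq, Finset.card_pair hpq']

lemma kempe_count (hloop : ∀ e : E, ¬ (ends e).IsDiag) (hprop : Proper ends π)
    (hg : π g = some α ∨ π g = some β)
    {a b c : V} (hab : a ≠ b) (hac : a ≠ c) (hbc : b ≠ c)
    (hdeg : ∀ v : V, v = a ∨ v = b ∨ v = c →
      ((Finset.univ.filter (fun e => Reach ends π α β g e)).filter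
        (fun e => v ∈ ends e)).card = 1) :
    False := by
  classical
  set C := Finset.univ.filter (fun e => Reach ends π α β g e) with hC
  have hgC : g ∈ C := Finset.mem_filter.2 ⟨Finset.mem_univ _, Relation.ReflTransGen.refl⟩
  -- within-C reachability
  have hwithin : ∀ e ∈ C, Relation.ReflTransGen
      (fun a b => a ∈ C ∧ b ∈ C ∧ KRel ends π α β a b) g e := by
    intro e he
    have hre : Reach ends π α β g e := (Finset.mem_filter.1 he).2
    clear he
    induction hre with
    | refl => exact Relation.ReflTransGen.refl
    | @tail b' e' h1 h2 ih =>
      exact ih.tail ⟨Finset.mem_filter.2 ⟨Finset.mem_univ _, h1⟩,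
        Finset.mem_filter.2 ⟨Finset.mem_univ _, h1.tail h2⟩, h2⟩
  have hconn := conn_card (KRel ends π α β) hloop (fun e e' h => h.2.2)
    C.card C g hgC rfl hwithin
  -- degree at most two everywhere
  have hdeg2 : ∀ v : V, (C.filter (fun e => v ∈ ends e)).card ≤ 2 := by
    intro v
    have hsub : C.filter (fun e => v ∈ ends e) ⊆
        (Finset.univ.filter (fun e => π e = some α ∧ v ∈ ends e)) ∪
        (Finset.univ.filter (fun e => π e = some β ∧ v ∈ ends e)) := by
      intro e he
      simp only [hC, Finset.mem_filter, Finset.mem_union, Finset.mem_univ, true_and] at he ⊢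
      rcases reach_ab hg he.1 with h | h
      · exact Or.inl ⟨h, he.2⟩
      · exact Or.inr ⟨h, he.2⟩
    have h1 : (Finset.univ.filter (fun e => π e = some α ∧ v ∈ ends e)).card ≤ 1 := by
      rw [Finset.card_le_one]
      intro e he e' he'
      simp only [Finset.mem_filter] at he he'
      by_contra hne
      exact hprop e e' v α hne he.2.2 he'.2.2 he.2.1 he'.2.1
    have h2 : (Finset.univ.filter (fun e => π e = some β ∧ v ∈ ends e)).card ≤ 1 := by
      rw [Finset.card_le_one]
      intro e he e' he'
      simp only [Finset.mem_filter] at he he'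
      by_contra hne
      exact hprop e e' v β hne he.2.2 he'.2.2 he.2.1 he'.2.1
    calc (C.filter (fun e => v ∈ ends e)).card ≤ _ := Finset.card_le_card hsub
      _ ≤ _ := Finset.card_union_le _ _
      _ ≤ 2 := by omega
  -- handshake
  have hhs : ∑ v : V, (C.filter (fun e => v ∈ ends e)).card = 2 * C.card := by
    have h1 : ∀ v : V, (C.filter (fun e => v ∈ ends e)).card
        = ∑ e ∈ C, if v ∈ ends e then 1 else 0 := by
      intro v
      rw [Finset.card_filter]
    calc ∑ v : V, (C.filter (fun e => v ∈ ends e)).card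
        = ∑ v : V, ∑ e ∈ C, if v ∈ ends e then 1 else 0 := by
          exact Finset.sum_congr rfl (fun v _ => h1 v)
      _ = ∑ e ∈ C, ∑ v : V, if v ∈ ends e then 1 else 0 := Finset.sum_comm
      _ = ∑ e ∈ C, (Finset.univ.filter (fun v : V => v ∈ ends e)).card := by
          exact Finset.sum_congr rfl (fun e _ => (Finset.card_filter _ _).symm)
      _ = ∑ _e ∈ C, 2 := Finset.sum_congr rfl (fun e _ => two_endpoints hloop e)
      _ = 2 * C.card := by rw [Finset.sum_const, smul_eq_mul, mul_comm]
  set Vs := vertexSet ends C with hVs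
  have hmemVs : ∀ v : V, v = a ∨ v = b ∨ v = c → v ∈ Vs := by
    intro v hv
    have := hdeg v hv
    have hne : (C.filter (fun e => v ∈ ends e)).Nonempty := by
      rw [← Finset.card_pos, this]; omega
    obtain ⟨e, he⟩ := hne
    simp only [Finset.mem_filter] at he
    exact Finset.mem_filter.2 ⟨Finset.mem_univ _, e, he.1, he.2⟩
  have habc : ({a, b, c} : Finset V) ⊆ Vs := by
    intro v hv
    simp only [Finset.mem_insert, Finset.mem_singleton] at hv
    exact hmemVs v hv
  have hsum_univ : ∑ v : V, (C.filter (fun e => v ∈ ends e)).card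
      = ∑ v ∈ Vs, (C.filter (fun e => v ∈ ends e)).card := by
    symm
    apply Finset.sum_subset (Finset.subset_univ _)
    intro v _ hv
    rw [Finset.card_eq_zero, Finset.filter_eq_empty_iff]
    intro e he
    intro hve
    exact hv (Finset.mem_filter.2 ⟨Finset.mem_univ _, e, he, hve⟩)
  have hsplit : ∑ v ∈ Vs \ {a, b, c}, (C.filter (fun e => v ∈ ends e)).card
      + ∑ v ∈ ({a, b, c} : Finset V), (C.filter (fun e => v ∈ ends e)).card
      = ∑ v ∈ Vs, (C.filter (fun e => v ∈ ends e)).card :=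
    Finset.sum_sdiff habc
  have habc_sum : ∑ v ∈ ({a, b, c} : Finset V), (C.filter (fun e => v ∈ ends e)).card = 3 := by
    rw [Finset.sum_insert (by simp [hab, hac]), Finset.sum_insert (by simp [hbc]),
      Finset.sum_singleton, hdeg a (Or.inl rfl), hdeg b (Or.inr (Or.inl rfl)),
      hdeg c (Or.inr (Or.inr rfl))]
    omega
  have hrest : ∑ v ∈ Vs \ {a, b, c}, (C.filter (fun e => v ∈ ends e)).card
      ≤ 2 * (Vs \ {a, b, c}).card := by
    calc _ ≤ ∑ _v ∈ Vs \ {a, b, c}, 2 := Finset.sum_le_sum (fun v _ => hdeg2 v)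
      _ = _ := by rw [Finset.sum_const, smul_eq_mul, mul_comm]
  have hcard3 : ({a, b, c} : Finset V).card = 3 := by
    rw [Finset.card_insert_of_notMem (by simp [hab, hac]),
      Finset.card_insert_of_notMem (by simp [hbc]), Finset.card_singleton]
  have hsd : (Vs \ {a, b, c}).card + 3 = Vs.card := by
    rw [← hcard3]
    exact Finset.card_sdiff_add_card_eq_card habc
  omega

end KCount


section FactB

open scoped Classical

lemma fan_fact_b {x : V} {e0 : E} (hloop : ∀ e : E, ¬ (ends e).IsDiag) :
    ∀ (j : ℕ) (π : E → Option (Fin k)) (n : ℕ) (f : ℕ → E) (y : ℕ → V),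
    Proper ends π → π e0 = none → ¬ Extends ends π e0 →
    IsFan ends π x e0 n f y → ∀ i : ℕ, i < j → j ≤ n → y i ≠ y j →
    ∀ β : Fin k, (free ends π x).Nonempty →
    β ∈ free ends π (y i) → β ∈ free ends π (y j) → False := by
  intro j
  induction j using Nat.strong_induction_on with
  | _ j IH =>
  intro π n f y hprop h0 hstuck hfan i hij hjn hyij β hfx hPi hPj
  obtain ⟨α, hαx⟩ := hfx
  have hxmem : ∀ l, l ≤ n → x ∈ ends (f l) := by
    intro l hl
    rw [hfan.ends_eq l hl]; simp
  have hymem : ∀ l, l ≤ n → y l ∈ ends (f l) := by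
    intro l hl
    rw [hfan.ends_eq l hl]; simp
  have hynex : ∀ l, l ≤ n → y l ≠ x := by
    intro l hl h
    exact hloop (f l) (by rw [hfan.ends_eq l hl, h]; exact Sym2.mk_isDiag_iff.2 rfl)
  have hαβ : α ≠ β := by
    rintro rfl
    exact fan_fact_a hloop i π n f y hprop h0 hstuck hfan (le_trans (le_of_lt hij) hjn) α hαx hPi
  -- minimal index with β free
  have hPex : ∃ m, β ∈ free ends π (y m) := ⟨i, hPi⟩
  set i₀ := Nat.find hPex with hi₀
  have hPi₀ : β ∈ free ends π (y i₀) := Nat.find_spec hPex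
  have hi₀i : i₀ ≤ i := Nat.find_le hPi
  have hmin : ∀ m, m < i₀ → β ∉ free ends π (y m) := fun m hm => Nat.find_min hPex hm
  by_cases hyi₀j : y i₀ = y j
  · -- reduce to the pair (i₀, i) with smaller top index
    have hi₀ne : i₀ ≠ i := by
      rintro rfl
      exact hyij (hyi₀j)
    exact IH i hij π n f y hprop h0 hstuck hfan i₀ (lt_of_le_of_ne hi₀i hi₀ne)
      (le_trans (le_of_lt hij) hjn) (by rw [hyi₀j]; exact hyij.symm) β ⟨α, hαx⟩ hPi₀ hPi
  -- now work with pair (i₀, j); note i₀ < j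
  have hi₀j : i₀ < j := lt_of_le_of_lt hi₀i hij
  have hi₀n : i₀ ≤ n := le_trans (le_of_lt hi₀j) hjn
  have hclean : ∀ l, 1 ≤ l → l ≤ i₀ → π (f l) ≠ some β := by
    intro l hl1 hl2 hc
    obtain ⟨c, m, hm, hc', hcm⟩ := hfan.parent l hl1 (le_trans hl2 hi₀n)
    rw [hc'] at hc
    obtain rfl : c = β := by simpa using hc
    exact hmin m (lt_of_lt_of_le hm hl2) hcm
  -- α is used at y i₀ and y j
  have hαyi : ∃ e, y i₀ ∈ ends e ∧ π e = some α := by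
    by_contra h
    push_neg at h
    exact fan_fact_a hloop i₀ π n f y hprop h0 hstuck hfan hi₀n α hαx
      (mem_free.2 (fun e he hc => h e he hc))
  obtain ⟨gi, hgiy, hgic⟩ := hαyi
  have hαyj : ∃ e, y j ∈ ends e ∧ π e = some α := by
    by_contra h
    push_neg at h
    exact fan_fact_a hloop j π n f y hprop h0 hstuck hfan hjn α hαx
      (mem_free.2 (fun e he hc => h e he hc))
  obtain ⟨gj, hgjy, hgjc⟩ := hαyj
  have hgiAB : π gi = some α ∨ π gi = some β := Or.inl hgic
  have hgjAB : π gj = some α ∨ π gj = some β := Or.inl hgjc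
  by_cases hxCi : ∃ e, x ∈ ends e ∧ Reach ends π α β gi e
  · -- x is in the component of gi; show x is NOT in the component of gj
    obtain ⟨exi, hexi_x, hexi_r⟩ := hxCi
    have hexiβ : π exi = some β := by
      rcases reach_ab hgiAB hexi_r with h | h
      · exact absurd h (mem_free.1 hαx exi hexi_x)
      · exact h
    have hxCj : ¬ ∃ e, x ∈ ends e ∧ Reach ends π α β gj e := by
      rintro ⟨exj, hexj_x, hexj_r⟩
      have hexjβ : π exj = some β := by
        rcases reach_ab hgjAB hexj_r with h | h
        · exact absurd h (mem_free.1 hαx exj hexj_x)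
        · exact h
      have hexeq : exj = exi := by
        by_contra hne
        exact hprop exj exi x β hne hexj_x hexi_x hexjβ hexiβ
      subst hexeq
      -- all three of x, y i₀, y j have degree exactly one in the common component
      have hrgjgi : Reach ends π α β gj gi := reach_trans hexj_r (reach_symm hexi_r)
      refine kempe_count hloop hprop hgjAB
        (a := x) (b := y i₀) (c := y j)
        (fun h => (hynex i₀ hi₀n) h.symm) (fun h => (hynex j hjn) h.symm) hyi₀j ?_
      intro v hv
      rcases hv with rfl | rfl | rfl
      · have hset : (Finset.univ.filter (fun e => Reach ends π α β gj e)).filter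
            (fun e => v ∈ ends e) = {exj} := by
          ext e
          simp only [Finset.mem_filter, Finset.mem_univ, true_and, Finset.mem_singleton]
          constructor
          · rintro ⟨hre, hxe⟩
            rcases reach_ab hgjAB hre with h | h
            · exact absurd h (mem_free.1 hαx e hxe)
            · by_contra hne
              exact hprop e exj v β hne hxe hexj_x h hexjβ
          · rintro rfl
            exact ⟨hexj_r, hexj_x⟩
        rw [hset, Finset.card_singleton]
      · have hset : (Finset.univ.filter (fun e => Reach ends π α β gj e)).filter
            (fun e => y i₀ ∈ ends e) = {gi} := by
          ext e
          simp only [Finset.mem_filter, Finset.mem_univ, true_and, Finset.mem_singleton]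
          constructor
          · rintro ⟨hre, hxe⟩
            rcases reach_ab hgjAB hre with h | h
            · by_contra hne
              exact hprop e gi (y i₀) α hne hxe hgiy h hgic
            · exact absurd h (mem_free.1 hPi₀ e hxe)
          · rintro rfl
            exact ⟨hrgjgi, hgiy⟩
        rw [hset, Finset.card_singleton]
      · have hset : (Finset.univ.filter (fun e => Reach ends π α β gj e)).filter
            (fun e => y j ∈ ends e) = {gj} := by
          ext e
          simp only [Finset.mem_filter, Finset.mem_univ, true_and, Finset.mem_singleton]
          constructor
          · rintro ⟨hre, hxe⟩
            rcases reach_ab hgjAB hre with h | h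
            · by_contra hne
              exact hprop e gj (y j) α hne hxe hgjy h hgjc
            · exact absurd h (mem_free.1 hPj e hxe)
          · rintro rfl
            exact ⟨Relation.ReflTransGen.refl, hgjy⟩
        rw [hset, Finset.card_singleton]
    -- swap the component of gj
    push_neg at hxCj
    set π₂ := kswap ends π α β gj with hπ₂
    have hprop₂ : Proper ends π₂ := kswap_proper hαβ hprop hgjAB
    have h0₂ : π₂ e0 = none := (kswap_none_iff e0).2 h0
    have hsupp : ∀ e, π e ≠ none → π₂ e ≠ none := by
      intro e he h2
      exact he ((kswap_none_iff e).1 h2)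
    have hstuck₂ : ¬ Extends ends π₂ e0 := fun h => hstuck (extends_mono hsupp h)
    have hyi₀_untouched : ∀ e, y i₀ ∈ ends e → ¬ Reach ends π α β gj e := by
      intro e he hr
      have hab : π e = some α ∨ π e = some β := reach_ab hgjAB hr
      have hregi : Reach ends π α β e gi := reach_single hab hgiAB he hgiy
      exact hxCj exi hexi_x (reach_trans (reach_trans hr hregi) hexi_r)
    have hfan₂ : IsFan ends π₂ x e0 j f y := by
      refine ⟨hfan.base, fun l hl => hfan.ends_eq l (le_trans hl hjn),
        fun a b ha hb => hfan.inj a b (le_trans ha hjn) (le_trans hb hjn), ?_⟩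
      intro l hl1 hl2
      obtain ⟨c, m, hm, hc, hcm⟩ := hfan.parent l hl1 (le_trans hl2 hjn)
      have hcα : c ≠ α := by
        rintro rfl
        exact (mem_free.1 hαx (f l) (hxmem l (le_trans hl2 hjn))) hc
      by_cases hcβ : c = β
      · rw [hcβ] at hc hcm
        have hfl_unreached : ¬ Reach ends π α β gj (f l) :=
          fun hr => hxCj (f l) (hxmem l (le_trans hl2 hjn)) hr
        have hπ₂fl : π₂ (f l) = some β := by
          rw [hπ₂, kswap_eq_of_not_reach hfl_unreached, hc]
        have hlgt : i₀ < l := by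
          rcases Nat.lt_or_ge i₀ l with h | h
          · exact h
          · exact absurd hc (hclean l hl1 h)
        refine ⟨β, i₀, hlgt, hπ₂fl, ?_⟩
        rw [hπ₂, free_kswap_untouched hyi₀_untouched]
        exact hPi₀
      · have hfl_unreached : ¬ Reach ends π α β gj (f l) := by
          intro hr
          rcases reach_ab hgjAB hr with h | h
          · rw [hc] at h; exact hcα (by simpa using h) |>.elim
          · rw [hc] at h; exact hcβ (by simpa using h) |>.elim
        have hπ₂fl : π₂ (f l) = some c := by
          rw [hπ₂, kswap_eq_of_not_reach hfl_unreached, hc]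
        exact ⟨c, m, hm, hπ₂fl, (mem_free_kswap_of_ne hcα hcβ).2 hcm⟩
    have hαx₂ : α ∈ free ends π₂ x := by
      rw [hπ₂, free_kswap_untouched hxCj]
      exact hαx
    have hαyj₂ : α ∈ free ends π₂ (y j) := alpha_free_kswap hαβ hgjAB hgjy hPj
    exact fan_fact_a hloop j π₂ j f y hprop₂ h0₂ hstuck₂ hfan₂ le_rfl α hαx₂ hαyj₂
  · -- x is not in the component of gi : swap it and use the truncated fan
    push_neg at hxCi
    set π₂ := kswap ends π α β gi with hπ₂
    have hprop₂ : Proper ends π₂ := kswap_proper hαβ hprop hgiAB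
    have h0₂ : π₂ e0 = none := (kswap_none_iff e0).2 h0
    have hsupp : ∀ e, π e ≠ none → π₂ e ≠ none := by
      intro e he h2
      exact he ((kswap_none_iff e).1 h2)
    have hstuck₂ : ¬ Extends ends π₂ e0 := fun h => hstuck (extends_mono hsupp h)
    have hfan₂ : IsFan ends π₂ x e0 i₀ f y := by
      refine ⟨hfan.base, fun l hl => hfan.ends_eq l (le_trans hl hi₀n),
        fun a b ha hb => hfan.inj a b (le_trans ha hi₀n) (le_trans hb hi₀n), ?_⟩
      intro l hl1 hl2
      obtain ⟨c, m, hm, hc, hcm⟩ := hfan.parent l hl1 (le_trans hl2 hi₀n)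
      have hcα : c ≠ α := by
        rintro rfl
        exact (mem_free.1 hαx (f l) (hxmem l (le_trans hl2 hi₀n))) hc
      have hcβ : c ≠ β := by
        rintro rfl
        exact hclean l hl1 hl2 hc
      have hfl_unreached : ¬ Reach ends π α β gi (f l) := by
        intro hr
        rcases reach_ab hgiAB hr with h | h
        · rw [hc] at h; exact hcα (by simpa using h) |>.elim
        · rw [hc] at h; exact hcβ (by simpa using h) |>.elim
      have hπ₂fl : π₂ (f l) = some c := by
        rw [hπ₂, kswap_eq_of_not_reach hfl_unreached, hc]
      exact ⟨c, m, hm, hπ₂fl, (mem_free_kswap_of_ne hcα hcβ).2 hcm⟩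
    have hαx₂ : α ∈ free ends π₂ x := by
      rw [hπ₂, free_kswap_untouched hxCi]
      exact hαx
    have hαyi₂ : α ∈ free ends π₂ (y i₀) := alpha_free_kswap hαβ hgiAB hgiy hPi₀
    exact fan_fact_a hloop i₀ π₂ i₀ f y hprop₂ h0₂ hstuck₂ hfan₂ le_rfl α hαx₂ hαyi₂

end FactB


section Ext

open scoped Classical

lemma not_stuck (hloop : ∀ e : E, ¬ (ends e).IsDiag) {π : E → Option (Fin k)} (e0 : E)
    (hprop : Proper ends π) (h0 : π e0 = none)
    (hdeg : ∀ v : V, degree ends v ≤ k)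
    (hknum : ∀ a b : V, a ≠ b → degree ends a
      + (Finset.univ.filter (fun e => ends e = s(b, a))).card ≤ k) :
    Extends ends π e0 := by
  by_contra hstuck
  obtain ⟨x, y0, hends0⟩ := sym2_exists_rep (ends e0)
  have hxy0 : x ≠ y0 := fun h => hloop e0 (by rw [hends0, h]; exact Sym2.mk_isDiag_iff.2 rfl)
  have hfx : (free ends π x).Nonempty := by
    have h := le_card_free_add_degree_of_uncolored (ends := ends) π x e0
      (by rw [hends0]; simp) h0
    have := hdeg x
    rw [← Finset.card_pos]
    omega
  set P : ℕ → Prop := fun n => ∃ f y, IsFan ends π x e0 n f y with hP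
  have hP0 : P 0 := by
    refine ⟨fun _ => e0, fun _ => y0, rfl, ?_, ?_, ?_⟩
    · intro i hi
      interval_cases i
      exact hends0
    · intro i j hi hj _
      omega
    · intro i h1 h2
      omega
  have hbound : ∀ m, P m → m + 1 ≤ Fintype.card E := by
    rintro m ⟨f, y, hfan⟩
    have hinj := Finset.card_le_card_of_injOn f
      (fun l _ => Finset.mem_univ (f l))
      (fun l hl l' hl' hll => hfan.inj l l'
        (by simpa [Nat.lt_succ_iff] using Finset.mem_coe.1 hl)
        (by simpa [Nat.lt_succ_iff] using Finset.mem_coe.1 hl') hll)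
      (s := Finset.range (m+1))
    simpa using hinj
  set nmax := Nat.findGreatest P (Fintype.card E) with hnmax
  have hPn : P nmax := Nat.findGreatest_spec (Nat.zero_le _) hP0
  obtain ⟨f, y, hfan⟩ := hPn
  have hynex : ∀ l, l ≤ nmax → y l ≠ x := by
    intro l hl h
    exact hloop (f l) (by rw [hfan.ends_eq l hl, h]; exact Sym2.mk_isDiag_iff.2 rfl)
  set ys := (Finset.range (nmax+1)).image y with hys
  set FC := (Finset.Icc 1 nmax).image (fun l => π (f l)) with hFC
  have hFCcard : FC.card ≤ nmax := le_trans Finset.card_image_le (by simp)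
  have hused : ∀ w ∈ ys, ∀ β ∈ free ends π w, some β ∈ FC := by
    intro w hw β hβ
    obtain ⟨l, hl, rfl⟩ := Finset.mem_image.1 hw
    have hln : l ≤ nmax := by simpa [Nat.lt_succ_iff] using Finset.mem_range.1 hl
    have hβx : β ∉ free ends π x :=
      fun h => fan_fact_a hloop l π nmax f y hprop h0 hstuck hfan hln β h hβ
    obtain ⟨g, hgx, hgc⟩ : ∃ g, x ∈ ends g ∧ π g = some β := by
      rw [mem_free] at hβx
      push_neg at hβx
      exact hβx
    by_cases hgin : ∃ l', l' ≤ nmax ∧ f l' = g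
    · obtain ⟨l', hl', rfl⟩ := hgin
      have h1l' : 1 ≤ l' := by
        rcases Nat.eq_zero_or_pos l' with rfl | h
        · rw [hfan.base, h0] at hgc
          exact absurd hgc (by simp)
        · exact h
      exact Finset.mem_image.2 ⟨l', Finset.mem_Icc.2 ⟨h1l', hl'⟩, hgc⟩
    · push_neg at hgin
      obtain ⟨z, hz⟩ := Sym2.mem_iff_exists.mp hgx
      set f' := fun m => if m ≤ nmax then f m else g with hf'
      set y' := fun m => if m ≤ nmax then y m else z with hy'
      have hfan' : IsFan ends π x e0 (nmax+1) f' y' := by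
        refine ⟨?_, ?_, ?_, ?_⟩
        · rw [hf']
          simp only [Nat.zero_le, if_pos]
          exact hfan.base
        · intro i hi
          rcases Nat.lt_or_ge i (nmax+1) with h | h
          · rw [hf', hy']
            simp only [Nat.lt_succ_iff.1 h, if_pos]
            exact hfan.ends_eq i (Nat.lt_succ_iff.1 h)
          · have hieq : i = nmax + 1 := by omega
            rw [hf', hy', hieq]
            simp only [Nat.not_succ_le_self nmax, if_neg, Nat.succ_le_iff]
            simpa using hz
        · intro i j hi hj hij
          rcases Nat.lt_or_ge i (nmax+1) with h | h <;> rcases Nat.lt_or_ge j (nmax+1) with h' | h'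
          · rw [hf'] at hij
            simp only [Nat.lt_succ_iff.1 h, Nat.lt_succ_iff.1 h', if_pos] at hij
            exact hfan.inj i j (Nat.lt_succ_iff.1 h) (Nat.lt_succ_iff.1 h') hij
          · have hjeq : j = nmax + 1 := by omega
            rw [hf', hjeq] at hij
            simp only [Nat.lt_succ_iff.1 h, if_pos, Nat.not_succ_le_self, if_neg] at hij
            exact absurd hij (by
              intro hh
              exact (hgin i (Nat.lt_succ_iff.1 h)) hh)
          · have hieq : i = nmax + 1 := by omega
            rw [hf', hieq] at hij
            simp only [Nat.lt_succ_iff.1 h', if_pos, Nat.not_succ_le_self, if_neg] at hij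
            exact absurd hij.symm (by
              intro hh
              exact (hgin j (Nat.lt_succ_iff.1 h')) hh)
          · omega
        · intro i h1 h2
          rcases Nat.lt_or_ge i (nmax+1) with h | h
          · have hin : i ≤ nmax := Nat.lt_succ_iff.1 h
            obtain ⟨c, m, hm, hc, hcm⟩ := hfan.parent i h1 hin
            refine ⟨c, m, hm, ?_, ?_⟩
            · rw [hf']
              simp only [hin, if_pos]
              exact hc
            · rw [hy']
              simp only [le_trans (le_of_lt hm) hin, if_pos]
              exact hcm
          · have hieq : i = nmax + 1 := by omega
            refine ⟨β, l, by omega, ?_, ?_⟩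
            · rw [hf', hieq]
              simp only [Nat.not_succ_le_self, if_neg]
              exact hgc
            · rw [hy']
              simp only [hln, if_pos]
              exact hβ
      have hle2 : nmax + 2 ≤ Fintype.card E := hbound (nmax+1) ⟨f', y', hfan'⟩
      have hle3 : nmax + 1 ≤ Nat.findGreatest P (Fintype.card E) :=
        Nat.le_findGreatest (P := P) (by omega) ⟨f', y', hfan'⟩
      rw [← hnmax] at hle3
      omega
  have hdisj : ∀ w ∈ ys, ∀ w' ∈ ys, w ≠ w' →
      Disjoint ((free ends π w).image some) ((free ends π w').image some) := by
    intro w hw w' hw' hne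
    rw [Finset.disjoint_left]
    intro o ho ho'
    obtain ⟨β, hβ, rfl⟩ := Finset.mem_image.1 ho
    obtain ⟨β', hβ', hββ⟩ := Finset.mem_image.1 ho'
    have hββ' : β' = β := by simpa using hββ
    rw [hββ'] at hβ'
    obtain ⟨l, hl, rfl⟩ := Finset.mem_image.1 hw
    obtain ⟨l', hl', rfl⟩ := Finset.mem_image.1 hw'
    have hln : l ≤ nmax := by simpa [Nat.lt_succ_iff] using Finset.mem_range.1 hl
    have hl'n : l' ≤ nmax := by simpa [Nat.lt_succ_iff] using Finset.mem_range.1 hl'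
    rcases Nat.lt_or_ge l l' with h | h
    · exact fan_fact_b hloop l' π nmax f y hprop h0 hstuck hfan l h hl'n hne β hfx hβ hβ'
    · have hll : l' < l := by
        rcases Nat.lt_or_ge l' l with h' | h'
        · exact h'
        · exact absurd (le_antisymm h h') (fun hh => hne (by rw [hh]))
      exact fan_fact_b hloop l π nmax f y hprop h0 hstuck hfan l' hll hln hne.symm β hfx hβ' hβ
  have hsum_le : ∑ w ∈ ys, (free ends π w).card ≤ nmax := by
    calc ∑ w ∈ ys, (free ends π w).card
        = ∑ w ∈ ys, ((free ends π w).image some).card :=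
          Finset.sum_congr rfl (fun w _ =>
            (Finset.card_image_of_injective _ (Option.some_injective _)).symm)
      _ = (ys.biUnion (fun w => (free ends π w).image some)).card :=
          (Finset.card_biUnion hdisj).symm
      _ ≤ FC.card := by
          apply Finset.card_le_card
          intro o ho
          obtain ⟨w, hw, hwo⟩ := Finset.mem_biUnion.1 ho
          obtain ⟨β, hβ, rfl⟩ := Finset.mem_image.1 hwo
          exact hused w hw β hβ
      _ ≤ nmax := hFCcard
  have hsum_ge : nmax + 1 ≤ ∑ w ∈ ys, (free ends π w).card := by
    have hcard : (nmax + 1) = ∑ w ∈ ys, ((Finset.range (nmax+1)).filter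
        (fun l => y l = w)).card := by
      rw [hys, ← Finset.card_eq_sum_card_image]
      simp
    rw [hcard]
    apply Finset.sum_le_sum
    intro w hw
    obtain ⟨l₀, hl₀, rfl⟩ := Finset.mem_image.1 hw
    have hl₀n : l₀ ≤ nmax := by simpa [Nat.lt_succ_iff] using Finset.mem_range.1 hl₀
    have hwne : y l₀ ≠ x := hynex l₀ hl₀n
    have hmult : ((Finset.range (nmax+1)).filter (fun l => y l = y l₀)).card
        ≤ (Finset.univ.filter (fun e => ends e = s(x, y l₀))).card := by
      apply Finset.card_le_card_of_injOn f
      · intro l hl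
        simp only [Finset.mem_coe, Finset.mem_filter, Finset.mem_range, Nat.lt_succ_iff] at hl
        simp only [Finset.mem_coe, Finset.mem_filter, Finset.mem_univ, true_and]
        rw [hfan.ends_eq l hl.1, hl.2]
      · intro l hl l' hl' hll
        simp only [Finset.mem_coe, Finset.mem_filter, Finset.mem_range, Nat.lt_succ_iff] at hl hl'
        exact hfan.inj l l' hl.1 hl'.1 hll
    have hknum' := hknum (y l₀) x hwne
    have hfree := le_card_free_add_degree (ends := ends) π (y l₀)
    omega
  omega

end Ext


section Total

lemma exists_total (hloop : ∀ e : E, ¬ (ends e).IsDiag)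
    (hdeg : ∀ v : V, degree ends v ≤ k)
    (hknum : ∀ a b : V, a ≠ b → degree ends a
      + (Finset.univ.filter (fun e => ends e = s(b, a))).card ≤ k) :
    ∃ π : E → Option (Fin k), Proper ends π ∧ ∀ e, π e ≠ none := by
  classical
  suffices h : ∀ m (π : E → Option (Fin k)), Proper ends π →
      (Finset.univ.filter (fun e => π e = none)).card ≤ m →
      ∃ π', Proper ends π' ∧ ∀ e, π' e ≠ none by
    refine h (Fintype.card E) (fun _ => none) ?_
      (le_trans (Finset.card_le_card (Finset.subset_univ _)) (by simp))
    intro e₁ e₂ v c _ _ _ hc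
    exact absurd hc (by simp)
  intro m
  induction m with
  | zero =>
    intro π hprop hcard
    refine ⟨π, hprop, fun e he => ?_⟩
    have hmem : e ∈ Finset.univ.filter (fun e => π e = none) := by
      simp only [Finset.mem_filter, Finset.mem_univ, true_and]
      exact he
    rw [Finset.card_eq_zero.1 (Nat.le_zero.1 hcard)] at hmem
    simp at hmem
  | succ m ih =>
    intro π hprop hcard
    by_cases hne : (Finset.univ.filter (fun e => π e = none)).Nonempty
    · obtain ⟨e0, he0⟩ := hne
      have h0 : π e0 = none := (Finset.mem_filter.1 he0).2
      obtain ⟨π', hprop', hsupp, h0'⟩ := not_stuck hloop e0 hprop h0 hdeg hknum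
      apply ih π' hprop'
      have hsub : Finset.univ.filter (fun e => π' e = none) ⊆
          (Finset.univ.filter (fun e => π e = none)).erase e0 := by
        intro e he
        simp only [Finset.mem_filter, Finset.mem_univ, true_and] at he
        refine Finset.mem_erase.2 ⟨?_, ?_⟩
        · rintro rfl
          exact h0' he
        · simp only [Finset.mem_filter, Finset.mem_univ, true_and]
          by_contra hh
          exact (hsupp e hh) he
      have h1 := Finset.card_le_card hsub
      have h2 := Finset.card_erase_of_mem he0
      omega
    · rw [Finset.not_nonempty_iff_eq_empty] at hne
      refine ⟨π, hprop, fun e he => ?_⟩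
      have hmem : e ∈ Finset.univ.filter (fun e => π e = none) := by
        simp only [Finset.mem_filter, Finset.mem_univ, true_and]
        exact he
      rw [hne] at hmem
      simp at hmem

end Total

end Viz

/-- **Vizing's theorem for multigraphs.** For any multigraph `G`,
`Δ(G) ≤ χ(G) ≤ Δ(G) + μ(G)`. -/
theorem vizing_edge_coloring
    {V E : Type*} [Fintype V] [Fintype E] [DecidableEq V] [DecidableEq E]
    (ends : E → Sym2 V) (hloopless : ∀ e : E, ¬ (ends e).IsDiag) :
    maxDegree V E ends ≤ sInf {k : ℕ | ∃ π : E → Fin k, IsProperEdgeColoring ends π} ∧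
    sInf {k : ℕ | ∃ π : E → Fin k, IsProperEdgeColoring ends π}
      ≤ maxDegree V E ends + edgeMultiplicity V E ends := by
  classical
  have hSne : (Fintype.card E) ∈ {k : ℕ | ∃ π : E → Fin k, IsProperEdgeColoring ends π} := by
    refine ⟨fun e => (Fintype.equivFin E) e, ?_⟩
    intro e₁ e₂ hne _ h
    exact hne ((Fintype.equivFin E).injective h)
  constructor
  · have hmem := Nat.sInf_mem ⟨_, hSne⟩
    obtain ⟨π, hπ⟩ := hmem
    apply Finset.sup_le
    intro v _
    have hinj : Set.InjOn π (edgeStar ends v) := by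
      intro e₁ h1 e₂ h2 he
      by_contra hne
      exact hπ e₁ e₂ hne
        ⟨v, by simpa [edgeStar] using Finset.mem_coe.1 h1,
          by simpa [edgeStar] using Finset.mem_coe.1 h2⟩ he
    have hcard := Finset.card_le_card_of_injOn π (fun e _ => Finset.mem_univ (π e)) hinj
    simpa [degree] using hcard
  · apply Nat.sInf_le
    have hdeg : ∀ v, degree ends v ≤ maxDegree V E ends + edgeMultiplicity V E ends :=
      fun v => le_trans (Finset.le_sup (Finset.mem_univ v)) (Nat.le_add_right _ _)
    have hknum : ∀ a b : V, a ≠ b → degree ends a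
        + (Finset.univ.filter (fun e => ends e = s(b, a))).card
        ≤ maxDegree V E ends + edgeMultiplicity V E ends := by
      intro a b hab
      have h1 : degree ends a ≤ maxDegree V E ends := Finset.le_sup (Finset.mem_univ a)
      have h2 : (Finset.univ.filter (fun e => ends e = s(b, a))).card
          ≤ edgeMultiplicity V E ends := by
        have hle := Finset.le_sup (f := fun p : V × V =>
          if p.1 ≠ p.2 then (Finset.univ.filter (fun e => ends e = s(p.1, p.2))).card else 0)
          (Finset.mem_univ ((b, a) : V × V))
        have hba : b ≠ a := fun h => hab h.symm
        simpa [edgeMultiplicity, hba] using hle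
      omega
    obtain ⟨π, hprop, htot⟩ := Viz.exists_total (k := maxDegree V E ends + edgeMultiplicity V E ends)
      hloopless hdeg hknum
    refine ⟨fun e => (π e).get (Option.ne_none_iff_isSome.1 (htot e)), ?_⟩
    rintro e₁ e₂ hne ⟨v, h1, h2⟩ heq
    have hc1 : π e₁ = some ((π e₁).get (Option.ne_none_iff_isSome.1 (htot e₁))) :=
      (Option.some_get _).symm
    have hc2 : π e₂ = some ((π e₂).get (Option.ne_none_iff_isSome.1 (htot e₂))) :=
      (Option.some_get _).symm
    exact hprop e₁ e₂ v ((π e₁).get (Option.ne_none_iff_isSome.1 (htot e₁))) hne h1 h2 hc1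
      (by simp only [] at heq; rw [hc2, heq])
end

section
/- Let G = (V,E) be a bipartite multigraph and let k be a positive integer. Then there exists an assignment of colors π : E → {1,…,k} such that |π(δ(v))| ≥ min{deg(v), k} holds for every vertex v ∈ V. -/
open Finset

lemma card_filter_equiv {ι κ : Type*} [Fintype ι] [Fintype κ] [DecidableEq ι] [DecidableEq κ]
    (e : ι ≃ κ) (p : κ → Prop) [DecidablePred p] :
    (univ.filter (fun i => p (e i))).card = (univ.filter p).card := by
  have : univ.filter (fun i => p (e i)) = (univ.filter p).map (e.symm.toEmbedding) := by
    ext i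
    simp only [mem_filter, mem_univ, true_and, mem_map, Equiv.coe_toEmbedding]
    constructor
    · intro h; exact ⟨e i, h, by simp⟩
    · rintro ⟨j, hj, rfl⟩; simpa using hj
  rw [this, Finset.card_map]

lemma sigma_fiber_card {γ : Type*} [Fintype γ] [DecidableEq γ] (m : γ → ℕ) (v : γ) :
    (univ.filter (fun s : Σ v', Fin (m v') => s.1 = v)).card = m v := by
  rw [← Fintype.card_subtype]
  rw [show m v = Fintype.card (Fin (m v)) from (Fintype.card_fin _).symm]
  exact Fintype.card_congr
    ({ toFun := fun s => Fin.cast (congrArg m s.2) s.1.2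
       invFun := fun x => ⟨⟨v, x⟩, rfl⟩
       left_inv := by rintro ⟨⟨v', x⟩, rfl⟩; rfl
       right_inv := fun x => rfl } :
      {s : (Σ v', Fin (m v')) // s.1 = v} ≃ Fin (m v))

/-- There is a function `Fin (∑ m) → γ` with prescribed fiber sizes. -/
lemma pad_exists {γ : Type*} [Fintype γ] [DecidableEq γ] (m : γ → ℕ) :
    ∃ p : Fin (∑ v, m v) → γ, ∀ v, (univ.filter (fun i => p i = v)).card = m v := by
  have hcard : Fintype.card (Fin (∑ v, m v)) = Fintype.card (Σ v', Fin (m v')) := by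
    simp [Fintype.card_sigma]
  obtain e := Fintype.equivOfCardEq hcard
  refine ⟨fun i => (e i).1, fun v => ?_⟩
  rw [card_filter_equiv e (fun s : Σ v', Fin (m v') => s.1 = v)]
  exact sigma_fiber_card m v

lemma card_filter_sum {E P : Type*} [Fintype E] [Fintype P] [DecidableEq E] [DecidableEq P]
    (q : E ⊕ P → Prop) [DecidablePred q] :
    (univ.filter q).card
      = (univ.filter (fun e => q (Sum.inl e))).card + (univ.filter (fun p => q (Sum.inr p))).card := by
  have : univ.filter q
      = (univ.filter (fun e => q (Sum.inl e))).disjSum (univ.filter (fun p => q (Sum.inr p))) := by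
    ext x
    cases x <;> simp [Finset.mem_disjSum]
  rw [this, Finset.card_disjSum]

/-- Regular bipartite multigraphs are properly k-edge-colorable. -/
lemma reg_coloring {E γ : Type*} [Fintype E] [DecidableEq E] [Fintype γ] [DecidableEq γ]
    (f g : E → γ) :
    ∀ (k : ℕ) (E₀ : Finset E),
      (∀ v, (E₀.filter (fun e => f e = v)).card = k) →
      (∀ v, (E₀.filter (fun e => g e = v)).card = k) →
      ∃ π : E → ℕ, (∀ e ∈ E₀, π e < k) ∧
        (∀ v, Set.InjOn π (E₀.filter (fun e => f e = v))) ∧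
        (∀ v, Set.InjOn π (E₀.filter (fun e => g e = v))) := by
  intro k
  induction k with
  | zero =>
    intro E₀ hf _
    have hE : ∀ e ∈ E₀, False := by
      intro e he
      have := hf (f e)
      have : e ∈ E₀.filter (fun e' => f e' = f e) := by simp [he]
      have hcard := hf (f e)
      have := Finset.card_pos.mpr ⟨e, this⟩
      omega
    refine ⟨fun _ => 0, fun e he => absurd he (by intro h; exact hE e h), ?_, ?_⟩ <;>
    · intro v x hx
      exfalso
      simp only [coe_filter, Set.mem_setOf_eq] at hx
      exact hE x hx.1
  | succ k ih =>
    intro E₀ hf hg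
    -- Hall's condition for the neighborhood function
    set t : γ → Finset γ := fun v => (E₀.filter (fun e => f e = v)).image g with ht
    have hall : ∀ s : Finset γ, s.card ≤ (s.biUnion t).card := by
      intro s
      have hdisj : ∀ v₁ ∈ s, ∀ v₂ ∈ s, v₁ ≠ v₂ →
          Disjoint (E₀.filter (fun e => f e = v₁)) (E₀.filter (fun e => f e = v₂)) := by
        intro v₁ _ v₂ _ hne
        simp only [Finset.disjoint_left, mem_filter]
        rintro e ⟨_, h1⟩ ⟨_, h2⟩
        exact hne (h1 ▸ h2 ▸ rfl)
      have hF : (s.biUnion (fun v => E₀.filter (fun e => f e = v))).card = s.card * (k+1) := by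
        rw [Finset.card_biUnion hdisj]
        rw [Finset.sum_congr rfl (fun v _ => hf v), Finset.sum_const, smul_eq_mul]
      have hsub : s.biUnion (fun v => E₀.filter (fun e => f e = v)) ⊆
          (s.biUnion t).biUnion (fun w => E₀.filter (fun e => g e = w)) := by
        intro e he
        simp only [mem_biUnion, mem_filter] at he ⊢
        obtain ⟨v, hv, he₀, hfe⟩ := he
        refine ⟨g e, ⟨v, hv, ?_⟩, he₀, rfl⟩
        rw [ht]
        exact mem_image.mpr ⟨e, mem_filter.mpr ⟨he₀, hfe⟩, rfl⟩
      have hB : ((s.biUnion t).biUnion (fun w => E₀.filter (fun e => g e = w))).card ≤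
          (s.biUnion t).card * (k+1) := by
        calc _ ≤ ∑ w ∈ s.biUnion t, (E₀.filter (fun e => g e = w)).card :=
              Finset.card_biUnion_le
          _ = (s.biUnion t).card * (k+1) := by
              rw [Finset.sum_congr rfl (fun w _ => hg w), Finset.sum_const, smul_eq_mul]
      have := (Finset.card_le_card hsub).trans hB
      rw [hF] at this
      exact le_of_mul_le_mul_right (by linarith) (Nat.succ_pos k)
    obtain ⟨m, hm_inj, hm_mem⟩ := (Finset.all_card_le_biUnion_card_iff_exists_injective t).mp hall
    -- choose a matching edge for each vertex
    have hch : ∀ v, ∃ e, e ∈ E₀ ∧ f e = v ∧ g e = m v := by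
      intro v
      have := hm_mem v
      simp only [ht, mem_image, mem_filter] at this
      obtain ⟨e, ⟨he₀, hfe⟩, hge⟩ := this
      exact ⟨e, he₀, hfe, hge⟩
    choose ed hed₀ hedf hedg using hch
    have hm_bij : Function.Bijective m := Finite.injective_iff_bijective.mp hm_inj
    set S : Finset E := Finset.univ.image ed with hS
    have hSsub : S ⊆ E₀ := by
      intro x hx
      simp only [hS, mem_image] at hx
      obtain ⟨v, _, rfl⟩ := hx
      exact hed₀ v
    have hSf : ∀ v, E₀.filter (fun e => f e = v) ∩ S = {ed v} := by
      intro v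
      ext x
      simp only [mem_inter, mem_filter, mem_singleton, hS, mem_image]
      constructor
      · rintro ⟨⟨_, hfx⟩, v', _, rfl⟩
        rw [hedf v'] at hfx; rw [hfx]
      · rintro rfl
        exact ⟨⟨hed₀ v, hedf v⟩, v, mem_univ v, rfl⟩
    have hSg : ∀ w, E₀.filter (fun e => g e = w) ∩ S = {ed ((Equiv.ofBijective m hm_bij).symm w)} := by
      intro w
      set v₀ := (Equiv.ofBijective m hm_bij).symm w with hv₀
      have hmv₀ : m v₀ = w := (Equiv.ofBijective m hm_bij).apply_symm_apply w
      ext x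
      simp only [mem_inter, mem_filter, mem_singleton, hS, mem_image]
      constructor
      · rintro ⟨⟨_, hgx⟩, v', _, rfl⟩
        rw [hedg v'] at hgx
        have : v' = v₀ := hm_inj (by rw [hgx, hmv₀])
        rw [this]
      · rintro rfl
        exact ⟨⟨hed₀ v₀, by rw [hedg v₀, hmv₀]⟩, v₀, mem_univ v₀, rfl⟩
    -- recurse on E₀ \ S
    have hf' : ∀ v, ((E₀ \ S).filter (fun e => f e = v)).card = k := by
      intro v
      have : (E₀ \ S).filter (fun e => f e = v)
          = E₀.filter (fun e => f e = v) \ {ed v} := by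
        rw [← hSf v]
        ext x; simp only [mem_filter, mem_sdiff, mem_inter]; tauto
      rw [this, Finset.card_sdiff_of_subset (by rw [← hSf v]; exact Finset.inter_subset_left)]
      rw [← hSf v, hf v]
      have : (E₀.filter (fun e => f e = v) ∩ S).card = 1 := by rw [hSf v]; simp
      omega
    have hg' : ∀ w, ((E₀ \ S).filter (fun e => g e = w)).card = k := by
      intro w
      have : (E₀ \ S).filter (fun e => g e = w)
          = E₀.filter (fun e => g e = w) \ {ed ((Equiv.ofBijective m hm_bij).symm w)} := by
        rw [← hSg w]
        ext x; simp only [mem_filter, mem_sdiff, mem_inter]; tauto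
      rw [this, Finset.card_sdiff_of_subset (by rw [← hSg w]; exact Finset.inter_subset_left)]
      rw [← hSg w, hg w]
      have : (E₀.filter (fun e => g e = w) ∩ S).card = 1 := by rw [hSg w]; simp
      omega
    obtain ⟨π₁, hπ₁lt, hπ₁f, hπ₁g⟩ := ih (E₀ \ S) hf' hg'
    refine ⟨fun x => if x ∈ S then k else π₁ x, ?_, ?_, ?_⟩
    · intro e he
      by_cases hx : e ∈ S
      · simp [hx]
      · simp only [hx, if_false]
        exact Nat.lt_succ_of_lt (hπ₁lt e (Finset.mem_sdiff.mpr ⟨he, hx⟩))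
    · intro v x hx y hy hxy
      simp only [coe_filter, Set.mem_setOf_eq] at hx hy
      by_cases hxS : x ∈ S <;> by_cases hyS : y ∈ S
      · have hx1 : x ∈ E₀.filter (fun e => f e = v) ∩ S := by
          simp [mem_filter, hx.1, hx.2, hxS]
        have hy1 : y ∈ E₀.filter (fun e => f e = v) ∩ S := by
          simp [mem_filter, hy.1, hy.2, hyS]
        rw [hSf v, mem_singleton] at hx1 hy1
        rw [hx1, hy1]
      · exfalso
        simp only [hxS, hyS, if_true, if_false] at hxy
        exact absurd hxy.symm (Nat.ne_of_lt (hπ₁lt y (Finset.mem_sdiff.mpr ⟨hy.1, hyS⟩)))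
      · exfalso
        simp only [hxS, hyS, if_true, if_false] at hxy
        exact absurd hxy (Nat.ne_of_lt (hπ₁lt x (Finset.mem_sdiff.mpr ⟨hx.1, hxS⟩)))
      · simp only [hxS, hyS, if_false] at hxy
        exact hπ₁f v (by simp only [coe_filter, Set.mem_setOf_eq, mem_sdiff]; exact ⟨⟨hx.1, hxS⟩, hx.2⟩)
          (by simp only [coe_filter, Set.mem_setOf_eq, mem_sdiff]; exact ⟨⟨hy.1, hyS⟩, hy.2⟩) hxy
    · intro w x hx y hy hxy
      simp only [coe_filter, Set.mem_setOf_eq] at hx hy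
      by_cases hxS : x ∈ S <;> by_cases hyS : y ∈ S
      · have hx1 : x ∈ E₀.filter (fun e => g e = w) ∩ S := by
          simp [mem_filter, hx.1, hx.2, hxS]
        have hy1 : y ∈ E₀.filter (fun e => g e = w) ∩ S := by
          simp [mem_filter, hy.1, hy.2, hyS]
        rw [hSg w, mem_singleton] at hx1 hy1
        rw [hx1, hy1]
      · exfalso
        simp only [hxS, hyS, if_true, if_false] at hxy
        exact absurd hxy.symm (Nat.ne_of_lt (hπ₁lt y (Finset.mem_sdiff.mpr ⟨hy.1, hyS⟩)))
      · exfalso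
        simp only [hxS, hyS, if_true, if_false] at hxy
        exact absurd hxy (Nat.ne_of_lt (hπ₁lt x (Finset.mem_sdiff.mpr ⟨hx.1, hxS⟩)))
      · simp only [hxS, hyS, if_false] at hxy
        exact hπ₁g w (by simp only [coe_filter, Set.mem_setOf_eq, mem_sdiff]; exact ⟨⟨hx.1, hxS⟩, hx.2⟩)
          (by simp only [coe_filter, Set.mem_setOf_eq, mem_sdiff]; exact ⟨⟨hy.1, hyS⟩, hy.2⟩) hxy

lemma split_exists {E α : Type*} [Fintype E] [DecidableEq E] [DecidableEq α]
    (f : E → α) (k : ℕ) (hk : 0 < k) :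
    ∃ f' : E → α × Fin (Fintype.card E + 1),
      (∀ e, (f' e).1 = f e) ∧
      (∀ p, (univ.filter (fun e => f' e = p)).card ≤ k) ∧
      (∀ a, (univ.filter (fun e => f' e = (a, (0 : Fin (Fintype.card E + 1))))).card
          = min (univ.filter (fun e => f e = a)).card k) := by
  classical
  set ι := Fintype.equivFin E with hι
  set r : E → ℕ := fun e => (univ.filter (fun e' => f e' = f e ∧ ι e' < ι e)).card with hr
  have hrlt : ∀ e, r e / k < Fintype.card E + 1 := by
    intro e
    have h1 : r e ≤ Fintype.card E := by
      have := Finset.card_filter_le (univ : Finset E) (fun e' => f e' = f e ∧ ι e' < ι e)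
      simpa using this
    exact Nat.lt_succ_of_le (le_trans (Nat.div_le_self _ _) h1)
  -- key facts about r on each fiber
  have key : ∀ a : α,
      Set.InjOn r (univ.filter (fun e => f e = a)) ∧
      (univ.filter (fun e => f e = a)).image r
        = Finset.range (univ.filter (fun e => f e = a)).card := by
    intro a
    set D := univ.filter (fun e => f e = a) with hD
    have hrD : ∀ e ∈ D, r e = (D.filter (fun e' => ι e' < ι e)).card := by
      intro e he
      have hfe : f e = a := (mem_filter.mp he).2
      have heq : (univ.filter (fun e' => f e' = f e ∧ ι e' < ι e))
          = D.filter (fun e' => ι e' < ι e) := by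
        ext e'
        simp [hD, hfe, and_comm]
      exact congrArg Finset.card heq
    have hmono : ∀ e₁ ∈ D, ∀ e₂ ∈ D, ι e₁ < ι e₂ → r e₁ < r e₂ := by
      intro e₁ h₁ e₂ h₂ hlt
      rw [hrD e₁ h₁, hrD e₂ h₂]
      apply Finset.card_lt_card
      constructor
      · intro x hx
        simp only [mem_filter] at hx ⊢
        exact ⟨hx.1, hx.2.trans hlt⟩
      · intro hcon
        have h3 : e₁ ∈ D.filter (fun e' => ι e' < ι e₂) := by
          simp only [mem_filter]; exact ⟨h₁, hlt⟩
        have := hcon h3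
        simp only [mem_filter] at this
        exact lt_irrefl _ this.2
    have hinj : Set.InjOn r D := by
      intro x hx y hy hxy
      by_contra hne
      have hιne : ι x ≠ ι y := fun h => hne (ι.injective h)
      rcases lt_or_gt_of_ne hιne with h | h
      · exact absurd hxy (Nat.ne_of_lt (hmono x (by simpa using hx) y (by simpa using hy) h))
      · exact absurd hxy.symm (Nat.ne_of_lt (hmono y (by simpa using hy) x (by simpa using hx) h))
    refine ⟨hinj, ?_⟩
    apply Finset.eq_of_subset_of_card_le
    · intro n hn
      obtain ⟨e, he, rfl⟩ := Finset.mem_image.mp hn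
      rw [Finset.mem_range, hrD e he]
      calc (D.filter (fun e' => ι e' < ι e)).card ≤ (D.erase e).card := by
            apply Finset.card_le_card
            intro x hx
            simp only [mem_filter] at hx
            refine Finset.mem_erase.mpr ⟨fun h => ?_, hx.1⟩
            subst h
            exact lt_irrefl _ hx.2
        _ < D.card := Finset.card_erase_lt_of_mem he
    · rw [Finset.card_range, Finset.card_image_of_injOn hinj]
  -- counting fibers of the split map via r
  have hcount : ∀ (a : α) (P : ℕ → Prop) [DecidablePred P],
      ((univ.filter (fun e => f e = a)).filter (fun e => P (r e))).card
        = ((Finset.range (univ.filter (fun e => f e = a)).card).filter P).card := by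
    intro a P _
    obtain ⟨hinj, himg⟩ := key a
    set D := univ.filter (fun e => f e = a) with hD
    have himg2 : (D.filter (fun e => P (r e))).image r = (D.image r).filter P := by
      ext n
      simp only [mem_image, mem_filter]
      constructor
      · rintro ⟨e, ⟨heD, hP⟩, rfl⟩
        exact ⟨⟨e, heD, rfl⟩, hP⟩
      · rintro ⟨⟨e, heD, rfl⟩, hP⟩
        exact ⟨e, ⟨heD, hP⟩, rfl⟩
    have := Finset.card_image_of_injOn
      (hinj.mono (by exact_mod_cast Finset.filter_subset (fun e => P (r e)) D))
    rw [← this, himg2, himg]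
  refine ⟨fun e => (f e, ⟨r e / k, hrlt e⟩), fun e => rfl, ?_, ?_⟩
  · rintro ⟨a, j⟩
    have hfib : univ.filter (fun e => ((f e, (⟨r e / k, hrlt e⟩ : Fin (Fintype.card E + 1)))
          = (a, j)))
        = (univ.filter (fun e => f e = a)).filter (fun e => r e / k = j.val) := by
      ext e
      simp only [mem_filter, mem_univ, true_and, Prod.mk.injEq, Fin.ext_iff]
    rw [hfib, hcount a (fun n => n / k = j.val)]
    calc ((Finset.range _).filter (fun n => n / k = j.val)).card
        ≤ (Finset.Ico (j.val * k) (j.val * k + k)).card := by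
          apply Finset.card_le_card
          intro x hx
          simp only [mem_filter, Finset.mem_range] at hx
          have hdm := Nat.div_add_mod x k
          have hmod : x % k < k := Nat.mod_lt _ hk
          rw [hx.2] at hdm
          rw [Finset.mem_Ico]
          have hc : j.val * k = k * j.val := Nat.mul_comm _ _
          omega
      _ = k := by rw [Nat.card_Ico]; omega
  · intro a
    have hfib : univ.filter (fun e => ((f e, (⟨r e / k, hrlt e⟩ : Fin (Fintype.card E + 1)))
          = (a, (0 : Fin (Fintype.card E + 1)))))
        = (univ.filter (fun e => f e = a)).filter (fun e => r e / k = 0) := by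
      ext e
      simp only [mem_filter, mem_univ, true_and, Prod.mk.injEq, Fin.ext_iff, Fin.val_zero]
    rw [hfib, hcount a (fun n => n / k = 0)]
    have : (Finset.range (univ.filter (fun e => f e = a)).card).filter (fun n => n / k = 0)
        = Finset.range (min (univ.filter (fun e => f e = a)).card k) := by
      ext x
      simp only [mem_filter, Finset.mem_range, Nat.div_eq_zero_iff, hk.ne', false_or, Nat.lt_min]
    rw [this, Finset.card_range]

/-- Gupta's theorem, abstract two-partition form. -/
lemma two_partition_coloring {E α β : Type*} [Fintype E] [DecidableEq E]
    [Fintype α] [DecidableEq α] [Fintype β] [DecidableEq β]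
    (f : E → α) (g : E → β) (k : ℕ) (hk : 0 < k) :
    ∃ π : E → Fin k,
      (∀ a, min (univ.filter (fun e => f e = a)).card k
          ≤ ((univ.filter (fun e => f e = a)).image π).card) ∧
      (∀ b, min (univ.filter (fun e => g e = b)).card k
          ≤ ((univ.filter (fun e => g e = b)).image π).card) := by
  classical
  obtain ⟨f', hf'1, hf'2, hf'3⟩ := split_exists f k hk
  obtain ⟨g', hg'1, hg'2, hg'3⟩ := split_exists g k hk
  set γ := (α × Fin (Fintype.card E + 1)) ⊕ (β × Fin (Fintype.card E + 1)) with hγ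
  set F : E → γ := fun e => Sum.inl (f' e) with hF
  set G : E → γ := fun e => Sum.inr (g' e) with hG
  set dF : γ → ℕ := fun v => (univ.filter (fun e => F e = v)).card with hdF'
  set dG : γ → ℕ := fun v => (univ.filter (fun e => G e = v)).card with hdG'
  have hdF : ∀ v, dF v ≤ k := by
    rintro (p | p)
    · show (univ.filter (fun e => F e = Sum.inl p)).card ≤ k
      have h : univ.filter (fun e => F e = Sum.inl p) = univ.filter (fun e => f' e = p) := by
        ext e
        simp only [mem_filter, mem_univ, true_and, hF]
        exact ⟨fun h => Sum.inl.inj h, fun h => h ▸ rfl⟩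
      rw [h]; exact hf'2 p
    · show (univ.filter (fun e => F e = Sum.inr p)).card ≤ k
      have h : univ.filter (fun e => F e = Sum.inr p) = ∅ := by
        ext e; simp [hF]
      rw [h]; simp
  have hdG : ∀ v, dG v ≤ k := by
    rintro (p | p)
    · show (univ.filter (fun e => G e = Sum.inl p)).card ≤ k
      have h : univ.filter (fun e => G e = Sum.inl p) = ∅ := by
        ext e; simp [hG]
      rw [h]; simp
    · show (univ.filter (fun e => G e = Sum.inr p)).card ≤ k
      have h : univ.filter (fun e => G e = Sum.inr p) = univ.filter (fun e => g' e = p) := by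
        ext e
        simp only [mem_filter, mem_univ, true_and, hG]
        exact ⟨fun h => Sum.inr.inj h, fun h => h ▸ rfl⟩
      rw [h]; exact hg'2 p
  set m : γ → ℕ := fun v => k - dF v with hm'
  set n : γ → ℕ := fun v => k - dG v with hn'
  have hsumF : ∑ v, dF v = Fintype.card E := by
    simp only [hdF']
    exact (Finset.card_eq_sum_card_fiberwise (fun x _ => mem_univ (F x))).symm.trans
      Finset.card_univ
  have hsumG : ∑ v, dG v = Fintype.card E := by
    simp only [hdG']
    exact (Finset.card_eq_sum_card_fiberwise (fun x _ => mem_univ (G x))).symm.trans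
      Finset.card_univ
  have hmm : ∑ v, m v + ∑ v, dF v = ∑ _v : γ, k := by
    rw [← Finset.sum_add_distrib]
    exact Finset.sum_congr rfl (fun v _ => Nat.sub_add_cancel (hdF v))
  have hnn : ∑ v, n v + ∑ v, dG v = ∑ _v : γ, k := by
    rw [← Finset.sum_add_distrib]
    exact Finset.sum_congr rfl (fun v _ => Nat.sub_add_cancel (hdG v))
  have hsum : ∑ v, m v = ∑ v, n v := by omega
  obtain ⟨p₁, hp₁⟩ := pad_exists m
  obtain ⟨p₂0, hp₂0⟩ := pad_exists n
  set p₂ : Fin (∑ v, m v) → γ := fun i => p₂0 (finCongr hsum i) with hp₂'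
  have hp₂ : ∀ v, (univ.filter (fun i => p₂ i = v)).card = n v := by
    intro v
    rw [hp₂']
    rw [card_filter_equiv (finCongr hsum) (fun i => p₂0 i = v)]
    exact hp₂0 v
  set Ft : E ⊕ Fin (∑ v, m v) → γ := Sum.elim F p₁ with hFt
  set Gt : E ⊕ Fin (∑ v, m v) → γ := Sum.elim G p₂ with hGt
  have hFreg : ∀ v, ((univ : Finset (E ⊕ Fin (∑ v, m v))).filter (fun x => Ft x = v)).card = k := by
    intro v
    rw [card_filter_sum (fun x => Ft x = v)]
    simp only [hFt, Sum.elim_inl, Sum.elim_inr]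
    rw [hp₁ v]
    have h1 : (univ.filter (fun e => F e = v)).card ≤ k := hdF v
    simp only [hm', hdF']
    omega
  have hGreg : ∀ v, ((univ : Finset (E ⊕ Fin (∑ v, m v))).filter (fun x => Gt x = v)).card = k := by
    intro v
    rw [card_filter_sum (fun x => Gt x = v)]
    simp only [hGt, Sum.elim_inl, Sum.elim_inr]
    rw [hp₂ v]
    have h1 : (univ.filter (fun e => G e = v)).card ≤ k := hdG v
    simp only [hn', hdG']
    omega
  obtain ⟨πt, hπlt, hπf, hπg⟩ := reg_coloring Ft Gt k univ hFreg hGreg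
  set π : E → Fin k := fun e => ⟨πt (Sum.inl e), hπlt _ (mem_univ _)⟩ with hπ'
  refine ⟨π, ?_, ?_⟩
  · intro a
    set D₀ := univ.filter (fun e => f' e = (a, (0 : Fin (Fintype.card E + 1)))) with hD₀
    have hsub : D₀ ⊆ univ.filter (fun e => f e = a) := by
      intro e he
      simp only [hD₀, mem_filter] at he ⊢
      exact ⟨he.1, by rw [← hf'1 e, he.2]⟩
    have hinj : Set.InjOn π D₀ := by
      intro x hx y hy hxy
      simp only [hD₀, coe_filter, Set.mem_setOf_eq] at hx hy
      have hvx : Sum.inl x ∈ (univ.filter (fun z => Ft z = Sum.inl (a, (0 : Fin (Fintype.card E + 1)))) :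
          Finset (E ⊕ Fin (∑ v, m v))) := by
        simp only [mem_filter, mem_univ, true_and, hFt, Sum.elim_inl, hF, hx.2]
      have hvy : Sum.inl y ∈ (univ.filter (fun z => Ft z = Sum.inl (a, (0 : Fin (Fintype.card E + 1)))) :
          Finset (E ⊕ Fin (∑ v, m v))) := by
        simp only [mem_filter, mem_univ, true_and, hFt, Sum.elim_inl, hF, hy.2]
      have : πt (Sum.inl x) = πt (Sum.inl y) := congrArg Fin.val hxy
      have := hπf _ (by exact_mod_cast hvx) (by exact_mod_cast hvy) this
      exact Sum.inl.injEq _ _ ▸ this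
    calc min (univ.filter (fun e => f e = a)).card k = D₀.card := (hf'3 a).symm
      _ = (D₀.image π).card := (Finset.card_image_of_injOn hinj).symm
      _ ≤ ((univ.filter (fun e => f e = a)).image π).card :=
          Finset.card_le_card (Finset.image_subset_image hsub)
  · intro b
    set D₀ := univ.filter (fun e => g' e = (b, (0 : Fin (Fintype.card E + 1)))) with hD₀
    have hsub : D₀ ⊆ univ.filter (fun e => g e = b) := by
      intro e he
      simp only [hD₀, mem_filter] at he ⊢
      exact ⟨he.1, by rw [← hg'1 e, he.2]⟩
    have hinj : Set.InjOn π D₀ := by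
      intro x hx y hy hxy
      simp only [hD₀, coe_filter, Set.mem_setOf_eq] at hx hy
      have hvx : Sum.inl x ∈ (univ.filter (fun z => Gt z = Sum.inr (b, (0 : Fin (Fintype.card E + 1)))) :
          Finset (E ⊕ Fin (∑ v, m v))) := by
        simp only [mem_filter, mem_univ, true_and, hGt, Sum.elim_inl, hG, hx.2]
      have hvy : Sum.inl y ∈ (univ.filter (fun z => Gt z = Sum.inr (b, (0 : Fin (Fintype.card E + 1)))) :
          Finset (E ⊕ Fin (∑ v, m v))) := by
        simp only [mem_filter, mem_univ, true_and, hGt, Sum.elim_inl, hG, hy.2]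
      have : πt (Sum.inl x) = πt (Sum.inl y) := congrArg Fin.val hxy
      have := hπg _ (by exact_mod_cast hvx) (by exact_mod_cast hvy) this
      exact Sum.inl.injEq _ _ ▸ this
    calc min (univ.filter (fun e => g e = b)).card k = D₀.card := (hg'3 b).symm
      _ = (D₀.image π).card := (Finset.card_image_of_injOn hinj).symm
      _ ≤ ((univ.filter (fun e => g e = b)).image π).card :=
          Finset.card_le_card (Finset.image_subset_image hsub)

/-- **Gupta's theorem for bipartite multigraphs.** For a bipartite multigraph `G` and a
positive integer `k`, there is an assignment of colors `π : E → [k]` such that every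
vertex `v` sees at least `min{deg(v), k}` distinct colors on its incident edges. -/
theorem gupta_bipartite
    {V E : Type*} [Fintype V] [Fintype E] [DecidableEq V] [DecidableEq E]
    (ends : E → Sym2 V) (hloopless : ∀ e : E, ¬ (ends e).IsDiag)
    (A : Set V)
    (hbipartite : ∀ e : E, ∃ u w : V, ends e = s(u, w) ∧ u ∈ A ∧ w ∉ A)
    (k : ℕ) (hk : 0 < k) :
    ∃ π : E → Fin k, ∀ v : V,
      min (degree ends v) k ≤ ((edgeStar ends v).image π).card := by
  classical
  choose u w huw hA hB using hbipartite
  obtain ⟨π, hπa, hπb⟩ := two_partition_coloring u w k hk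
  refine ⟨π, fun v => ?_⟩
  by_cases hv : v ∈ A
  · have hstar : edgeStar ends v = univ.filter (fun e => u e = v) := by
      ext e
      simp only [edgeStar, mem_filter, mem_univ, true_and, huw e, Sym2.mem_iff]
      constructor
      · rintro (rfl | rfl)
        · rfl
        · exact absurd hv (hB e)
      · rintro rfl; left; rfl
    rw [degree, hstar]
    exact hπa v
  · have hstar : edgeStar ends v = univ.filter (fun e => w e = v) := by
      ext e
      simp only [edgeStar, mem_filter, mem_univ, true_and, huw e, Sym2.mem_iff]
      constructor
      · rintro (rfl | rfl)
        · exact absurd (hA e) hv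
        · rfl
      · rintro rfl; right; rfl
    rw [degree, hstar]
    exact hπb v
end

section
/- Let G = (V,E) be a multigraph and let k be a positive integer. If the set S := {v ∈ V : deg(v) + μ(v) > k} is a stable set, then there exists an assignment of colors π : E → {1,…,k} such that |π(δ(v))| ≥ min{deg(v), k} holds for every vertex v ∈ V. -/
open Finset

/-- `μ(v)`: the maximum number of parallel edges incident to `v`, i.e. the maximum over
vertices `u ≠ v` of the number of edges with endpoints `u` and `v`. -/
def vertexMultiplicity {V E : Type*} [Fintype V] [Fintype E] [DecidableEq V] [DecidableEq E]
    (ends : E → Sym2 V) (v : V) : ℕ :=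
  Finset.univ.sup (fun u : V =>
    if u ≠ v then (Finset.univ.filter (fun e => ends e = s(u, v))).card else 0)

namespace Gupta

open scoped Classical
set_option linter.unusedSectionVars false

variable {V E : Type*} [Fintype V] [Fintype E] [DecidableEq V] [DecidableEq E]

section Defs

variable (ends : E → Sym2 V) {k : ℕ}

/-- star of `v` in the sub-multigraph `F`. -/
def star (F : Finset E) (v : V) : Finset E := F.filter (fun e => v ∈ ends e)

/-- degree of `v` in `F`. -/
def deg (F : Finset E) (v : V) : ℕ := (star ends F v).card

/-- number of edges of `F` with ends `u`, `v`. -/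
def mult (F : Finset E) (u v : V) : ℕ := (F.filter (fun e => ends e = s(u, v))).card

/-- maximum multiplicity at `v` within `F`. -/
def mu (F : Finset E) (v : V) : ℕ :=
  Finset.univ.sup (fun u : V => if u ≠ v then mult ends F u v else 0)

/-- palette of `v` : set of colors on edges of `F` at `v`. -/
def pal (F : Finset E) (π : E → Fin k) (v : V) : Finset (Fin k) := (star ends F v).image π

/-- proper coloring of the edges of `F`. -/
def Proper (F : Finset E) (π : E → Fin k) : Prop :=
  ∀ v : V, ∀ e ∈ star ends F v, ∀ f ∈ star ends F v, π e = π f → e = f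

/-- the cover condition of Gupta's theorem. -/
def Good (F : Finset E) (π : E → Fin k) : Prop :=
  ∀ v : V, min (deg ends F v) k ≤ (pal ends F π v).card

end Defs

section Basic

variable {ends : E → Sym2 V} {k : ℕ}

lemma mem_star {F : Finset E} {v : V} {e : E} :
    e ∈ star ends F v ↔ e ∈ F ∧ v ∈ ends e := by
  simp [star]

lemma star_subset {F F' : Finset E} (h : F' ⊆ F) (v : V) :
    star ends F' v ⊆ star ends F v :=
  Finset.filter_subset_filter _ h

lemma deg_le_of_subset {F F' : Finset E} (h : F' ⊆ F) (v : V) :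
    deg ends F' v ≤ deg ends F v :=
  Finset.card_le_card (star_subset h v)

lemma mult_le_of_subset {F F' : Finset E} (h : F' ⊆ F) (u v : V) :
    mult ends F' u v ≤ mult ends F u v :=
  Finset.card_le_card (Finset.filter_subset_filter _ h)

lemma mu_le_of_subset {F F' : Finset E} (h : F' ⊆ F) (v : V) :
    mu ends F' v ≤ mu ends F v := by
  apply Finset.sup_le
  intro u hu
  refine le_trans ?_ (Finset.le_sup (f := fun u : V => if u ≠ v then mult ends F u v else 0)
    (Finset.mem_univ u))
  by_cases huv : u ≠ v <;> simp [huv, mult_le_of_subset h]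

lemma pal_card_le_deg (F : Finset E) (π : E → Fin k) (v : V) :
    (pal ends F π v).card ≤ deg ends F v :=
  Finset.card_image_le

lemma mem_pal {F : Finset E} {π : E → Fin k} {v : V} {γ : Fin k} :
    γ ∈ pal ends F π v ↔ ∃ e ∈ star ends F v, π e = γ := by
  simp [pal]

lemma color_mem_pal {F : Finset E} {π : E → Fin k} {v : V} {e : E}
    (he : e ∈ star ends F v) : π e ∈ pal ends F π v :=
  Finset.mem_image_of_mem _ he

end Basic

section Loopless

variable {ends : E → Sym2 V} {k : ℕ} (hl : ∀ e : E, ¬ (ends e).IsDiag)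

include hl

lemma exists_ends (e : E) : ∃ u v : V, u ≠ v ∧ ends e = s(u, v) := by
  have hgen : ∀ z : Sym2 V, ¬ z.IsDiag → ∃ u v : V, u ≠ v ∧ z = s(u, v) := by
    intro z
    induction z using Sym2.inductionOn with
    | _ u v =>
      intro h
      refine ⟨u, v, fun huv => h ?_, rfl⟩
      rw [huv]; simp
  exact hgen (ends e) (hl e)

lemma ne_of_ends {e : E} {u v : V} (h : ends e = s(u, v)) : u ≠ v := by
  intro huv; exact hl e (by rw [h, huv]; simp)

lemma ends_eq_of_mem {e : E} {u v : V} (hu : u ∈ ends e) (hv : v ∈ ends e)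
    (huv : u ≠ v) : ends e = s(u, v) :=
  (Sym2.mem_and_mem_iff huv).mp ⟨hu, hv⟩

lemma eq_other_of_ends {e : E} {u v w : V} (h : ends e = s(u, v)) (hw : w ∈ ends e)
    (hwu : w ≠ u) : w = v := by
  rw [h, Sym2.mem_iff] at hw
  tauto

end Loopless

section Update

variable {ends : E → Sym2 V} {k : ℕ}

lemma pal_update_subset (F : Finset E) (π : E → Fin k) (e : E) (γ : Fin k) (v : V) :
    pal ends F (Function.update π e γ) v ⊆ insert γ (pal ends F π v) := by
  intro x hx
  rw [mem_pal] at hx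
  obtain ⟨f, hf, hfx⟩ := hx
  by_cases hfe : f = e
  · subst hfe
    simp only [Function.update_self] at hfx
    simp [hfx]
  · rw [Function.update_of_ne hfe] at hfx
    exact Finset.mem_insert_of_mem (hfx ▸ color_mem_pal hf)

lemma pal_update_of_not_mem {F : Finset E} {π : E → Fin k} {e : E} {γ : Fin k} {v : V}
    (he : e ∉ star ends F v) :
    pal ends F (Function.update π e γ) v = pal ends F π v := by
  unfold pal
  apply Finset.image_congr
  intro f hf
  exact Function.update_of_ne (fun h : f = e => he (h ▸ hf)) _ _

/-- recoloring an edge to a color free at both of its ends keeps the coloring proper. -/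
lemma proper_update {F : Finset E} {π : E → Fin k} (hp : Proper ends F π)
    {e : E} {γ : Fin k} (hγ : ∀ v, v ∈ ends e → γ ∉ pal ends F π v) :
    Proper ends F (Function.update π e γ) := by
  intro v f hf g hg hfg
  by_cases hfe : f = e <;> by_cases hge : g = e
  · rw [hfe, hge]
  · subst hfe
    rw [Function.update_self, Function.update_of_ne hge] at hfg
    exact absurd (hfg ▸ color_mem_pal hg) (hγ v (mem_star.mp hf).2)
  · subst hge
    rw [Function.update_self, Function.update_of_ne hfe] at hfg
    exact absurd (hfg ▸ color_mem_pal hf) (hγ v (mem_star.mp hg).2)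
  · rw [Function.update_of_ne hfe, Function.update_of_ne hge] at hfg
    exact hp v f hf g hg hfg

/-- coloring a new edge with a color free at both ends extends a proper coloring. -/
lemma proper_insert {F : Finset E} {π : E → Fin k} (hp : Proper ends F π)
    {e : E} (he : e ∉ F) {γ : Fin k} (hγ : ∀ v, v ∈ ends e → γ ∉ pal ends F π v) :
    Proper ends (insert e F) (Function.update π e γ) := by
  intro v f hf g hg hfg
  rw [mem_star, Finset.mem_insert] at hf hg
  by_cases hfe : f = e <;> by_cases hge : g = e
  · rw [hfe, hge]
  · subst hfe
    have hg' : g ∈ star ends F v := mem_star.mpr ⟨hg.1.resolve_left hge, hg.2⟩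
    rw [Function.update_self, Function.update_of_ne hge] at hfg
    exact absurd (hfg ▸ color_mem_pal hg') (hγ v hf.2)
  · subst hge
    have hf' : f ∈ star ends F v := mem_star.mpr ⟨hf.1.resolve_left hfe, hf.2⟩
    rw [Function.update_self, Function.update_of_ne hfe] at hfg
    exact absurd (hfg ▸ color_mem_pal hf') (hγ v hg.2)
  · rw [Function.update_of_ne hfe, Function.update_of_ne hge] at hfg
    exact hp v f (mem_star.mpr ⟨hf.1.resolve_left hfe, hf.2⟩)
      g (mem_star.mpr ⟨hg.1.resolve_left hge, hg.2⟩) hfg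

/-- after recoloring away the unique edge at `v` with color `β`, `β` is free at `v`. -/
lemma not_mem_pal_update {F : Finset E} {π : E → Fin k} (hp : Proper ends F π)
    {e : E} {v : V} (he : e ∈ star ends F v) {β γ : Fin k} (heβ : π e = β) (hγβ : γ ≠ β) :
    β ∉ pal ends F (Function.update π e γ) v := by
  intro hmem
  rw [mem_pal] at hmem
  obtain ⟨f, hf, hfβ⟩ := hmem
  by_cases hfe : f = e
  · subst hfe; rw [Function.update_self] at hfβ; exact hγβ hfβ
  · rw [Function.update_of_ne hfe] at hfβ
    exact hfe (hp v f hf e he (by rw [hfβ, heβ]))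

lemma not_mem_pal_update_of_ne {F : Finset E} {π : E → Fin k} {e : E} {v : V}
    {β γ : Fin k} (hβ : β ∉ pal ends F π v) (hγβ : β ≠ γ) :
    β ∉ pal ends F (Function.update π e γ) v := by
  intro hmem
  have := pal_update_subset F π e γ v hmem
  rw [Finset.mem_insert] at this
  rcases this with h | h
  · exact hγβ h
  · exact hβ h

end Update

section Extension

variable (ends : E → Sym2 V) {k : ℕ} (F : Finset E) (c ystar : V) (estar : E)

/-- A multifan chain at the vertex `c` with uncolored edge `estar = c–ystar`:
`Chain π w L` means `L` is a fan-derivation witnessing that `w` is a fan vertex: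
the list records steps `(e, β, w')` where `e` is an edge of `F ∖ estar` from `c`
to the previous vertex, colored `β`, and `β` is missing at the next vertex `w'`. -/
def Chain (π : E → Fin k) : V → List (E × Fin k × V) → Prop
  | w, [] => w = ystar
  | w, (e, β, w') :: L =>
      e ∈ F.erase estar ∧ ends e = s(c, w) ∧ π e = β ∧
        β ∉ pal ends (F.erase estar) π w' ∧ Chain π w' L

variable {ends F c ystar estar}

lemma chain_color_mem {π : E → Fin k} {w : V} {L : List (E × Fin k × V)}
    (hch : Chain ends F c ystar estar π w L) {s : E × Fin k × V} (hs : s ∈ L) :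
    s.1 ∈ star ends (F.erase estar) c ∧ π s.1 = s.2.1 := by
  induction L generalizing w with
  | nil => cases hs
  | cons t L ih =>
    obtain ⟨he, hends', hπ, hβ, hch'⟩ := hch
    rcases List.mem_cons.mp hs with h | h
    · subst h
      exact ⟨mem_star.mpr ⟨he, by rw [hends']; simp⟩, hπ⟩
    · exact ih hch' h

lemma chain_suffix {π : E → Fin k} {w : V} {L : List (E × Fin k × V)}
    (hch : Chain ends F c ystar estar π w L) {s : E × Fin k × V} (hs : s ∈ L) :
    ∃ (u : V) (L' : List (E × Fin k × V)), (s :: L').Sublist L ∧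
      Chain ends F c ystar estar π u (s :: L') := by
  induction L generalizing w with
  | nil => cases hs
  | cons t L ih =>
    rcases List.mem_cons.mp hs with h | h
    · subst h
      exact ⟨w, L, List.Sublist.refl _, hch⟩
    · obtain ⟨u, L', hsub, hch'⟩ := ih hch.2.2.2.2 h
      exact ⟨u, L', hsub.trans (List.sublist_cons_self _ _), hch'⟩

lemma chain_nodup (hl : ∀ e : E, ¬ (ends e).IsDiag) {π : E → Fin k} {w : V}
    {L : List (E × Fin k × V)} (hch : Chain ends F c ystar estar π w L) :
    ∃ L', Chain ends F c ystar estar π w L' ∧ (L'.map Prod.fst).Nodup := by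
  induction L generalizing w with
  | nil => exact ⟨[], hch, List.nodup_nil⟩
  | cons t L ih =>
    obtain ⟨he, hends', hπ, hβ, hch'⟩ := hch
    obtain ⟨L', hchL', hnd⟩ := ih hch'
    by_cases hmem : t.1 ∈ L'.map Prod.fst
    · -- t.1 occurs in L'; take the suffix of L' from there
      obtain ⟨s, hs, hfst⟩ := List.mem_map.mp hmem
      obtain ⟨u, L'', hsub, hch''⟩ := chain_suffix hchL' hs
      -- the head of (s :: L'') is the same edge, so u = w
      have hends'' : ends s.1 = s(c, u) := hch''.2.1
      have hu : u = w := by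
        rw [hfst] at hends''
        have hcw : c ≠ w := ne_of_ends hl hends'
        have hw : w ∈ ends t.1 := by rw [hends']; simp
        rw [hends''] at hw
        rcases Sym2.mem_iff.mp hw with h | h
        · exact absurd h.symm hcw
        · exact h.symm
      refine ⟨s :: L'', hu ▸ hch'', ?_⟩
      have := hsub.map Prod.fst
      exact this.nodup hnd
    · refine ⟨t :: L', ⟨he, hends', hπ, ?_, hchL'⟩, List.nodup_cons.mpr ⟨hmem, hnd⟩⟩
      exact hβ

/-- chain conditions are stable under recoloring an edge not on the chain
with a color that is not on the palette of `c`. -/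
lemma chain_update {π : E → Fin k} {w : V} {L : List (E × Fin k × V)}
    (hch : Chain ends F c ystar estar π w L) {e : E} {γ : Fin k}
    (hγc : γ ∉ pal ends (F.erase estar) π c)
    (hmem : e ∉ L.map Prod.fst) :
    Chain ends F c ystar estar (Function.update π e γ) w L := by
  induction L generalizing w with
  | nil => exact hch
  | cons t L ih =>
    obtain ⟨he, hends', hπ, hβ, hch'⟩ := hch
    have hne : t.1 ≠ e := fun h => hmem (by simp [← h])
    have hstar : t.1 ∈ star ends (F.erase estar) c :=
      mem_star.mpr ⟨he, by rw [hends']; simp⟩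
    have hβγ : t.2.1 ≠ γ := by
      intro h
      exact hγc (h ▸ hπ ▸ color_mem_pal hstar)
    refine ⟨he, hends', by rw [Function.update_of_ne hne]; exact hπ, ?_,
      ih hch' (fun h => hmem (List.mem_cons_of_mem _ h))⟩
    exact not_mem_pal_update_of_ne hβ hβγ

/-- **Shift lemma (F1).** If `γ` is free at both `c` and a fan vertex `w`,
then the coloring can be extended to all of `F`. -/
lemma chain_extend (hl : ∀ e : E, ¬ (ends e).IsDiag)
    (hestar : estar ∈ F) (hends : ends estar = s(c, ystar))
    {π : E → Fin k} (hp : Proper ends (F.erase estar) π)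
    {w : V} {L : List (E × Fin k × V)}
    (hch : Chain ends F c ystar estar π w L) (hnd : (L.map Prod.fst).Nodup)
    {γ : Fin k} (hγc : γ ∉ pal ends (F.erase estar) π c)
    (hγw : γ ∉ pal ends (F.erase estar) π w) :
    ∃ ψ : E → Fin k, Proper ends F ψ := by
  induction L generalizing π w γ with
  | nil =>
    have hw : w = ystar := hch
    subst hw
    refine ⟨Function.update π estar γ, ?_⟩
    have h := proper_insert hp (Finset.notMem_erase estar F) (γ := γ) ?_
    · rwa [Finset.insert_erase hestar] at h
    · intro v hv
      rw [hends, Sym2.mem_iff] at hv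
      rcases hv with h | h <;> subst h
      · exact hγc
      · exact hγw
  | cons t L ih =>
    obtain ⟨e, β, w'⟩ := t
    obtain ⟨he, hends', hπ, hβ, hch'⟩ := hch
    have hstar_c : e ∈ star ends (F.erase estar) c :=
      mem_star.mpr ⟨he, by rw [hends']; simp⟩
    have hstar_w : e ∈ star ends (F.erase estar) w :=
      mem_star.mpr ⟨he, by rw [hends']; simp⟩
    have hγβ : γ ≠ β := by
      intro h
      exact hγc (h ▸ hπ ▸ color_mem_pal hstar_c)
    have hfree : ∀ v, v ∈ ends e → γ ∉ pal ends (F.erase estar) π v := by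
      intro v hv
      rw [hends', Sym2.mem_iff] at hv
      rcases hv with h | h <;> subst h
      · exact hγc
      · exact hγw
    have hp₁ : Proper ends (F.erase estar) (Function.update π e γ) :=
      proper_update hp hfree
    have hβc : β ∉ pal ends (F.erase estar) (Function.update π e γ) c :=
      not_mem_pal_update hp hstar_c hπ hγβ
    have hβw' : β ∉ pal ends (F.erase estar) (Function.update π e γ) w' :=
      not_mem_pal_update_of_ne hβ (fun h => hγβ h.symm)
    have hch₁ : Chain ends F c ystar estar (Function.update π e γ) w' L :=
      chain_update hch' hγc (List.nodup_cons.mp hnd).1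
    exact ih hp₁ hch₁ (List.nodup_cons.mp hnd).2 hβc hβw'

end Extension

section Swap

variable (ends : E → Sym2 V) {k : ℕ} (G : Finset E) (π : E → Fin k) (α β : Fin k)

/-- an edge of the `(α,β)`-subgraph. -/
def Hedge (e : E) : Prop := e ∈ G ∧ (π e = α ∨ π e = β)

/-- adjacency in the `(α,β)`-subgraph. -/
def stepR (u v : V) : Prop := ∃ e, Hedge G π α β e ∧ ends e = s(u, v)

/-- reachability from `w` in the `(α,β)`-subgraph. -/
def Reach (w v : V) : Prop := Relation.ReflTransGen (stepR ends G π α β) w v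

/-- swapping `α` and `β` on the component of `w`. -/
noncomputable def swapC (w : V) : E → Fin k := fun e =>
  if Hedge G π α β e ∧ ∃ v ∈ ends e, Reach ends G π α β w v
  then Equiv.swap α β (π e) else π e

variable {ends G π α β}

lemma stepR_symm {u v : V} (h : stepR ends G π α β u v) : stepR ends G π α β v u := by
  obtain ⟨e, he, hends⟩ := h
  exact ⟨e, he, by rw [hends, Sym2.eq_swap]⟩

lemma reach_symm {u v : V} (h : Reach ends G π α β u v) : Reach ends G π α β v u := by
  induction h with
  | refl => exact Relation.ReflTransGen.refl
  | tail hs h ih => exact Relation.ReflTransGen.head (stepR_symm h) ih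

lemma reach_trans {u v x : V} (h : Reach ends G π α β u v) (h' : Reach ends G π α β v x) :
    Reach ends G π α β u x := Relation.ReflTransGen.trans h h'

/-- closure: if an `(α,β)`-edge has one end reachable, so is the other. -/
lemma reach_closure {w : V} {e : E} (he : Hedge G π α β e) {u v : V}
    (hu : u ∈ ends e) (hv : v ∈ ends e) (hru : Reach ends G π α β w u) :
    Reach ends G π α β w v := by
  by_cases huv : u = v
  · exact huv ▸ hru
  · exact hru.tail ⟨e, he, (Sym2.mem_and_mem_iff huv).mp ⟨hu, hv⟩⟩

lemma swapC_eq_of_far {w x : V} (hx : ¬ Reach ends G π α β w x) {e : E}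
    (he : x ∈ ends e) : swapC ends G π α β w e = π e := by
  unfold swapC
  rw [if_neg]
  rintro ⟨hH, v, hv, hrv⟩
  exact hx (reach_closure hH hv he hrv)

lemma swapC_eq_of_near {w x : V} (hx : Reach ends G π α β w x) {e : E}
    (he : e ∈ star ends G x) : swapC ends G π α β w e = Equiv.swap α β (π e) := by
  unfold swapC
  rw [mem_star] at he
  by_cases hH : Hedge G π α β e
  · rw [if_pos ⟨hH, x, he.2, hx⟩]
  · rw [if_neg (fun hcon => hH hcon.1)]
    have : ¬ (π e = α ∨ π e = β) := fun h => hH ⟨he.1, h⟩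
    push_neg at this
    rw [Equiv.swap_apply_of_ne_of_ne this.1 this.2]

lemma pal_swapC_far {w x : V} (hx : ¬ Reach ends G π α β w x) :
    pal ends G (swapC ends G π α β w) x = pal ends G π x := by
  unfold pal
  apply Finset.image_congr
  intro e he'
  exact swapC_eq_of_far hx (mem_star.mp he').2

lemma pal_swapC_near {w x : V} (hx : Reach ends G π α β w x) :
    pal ends G (swapC ends G π α β w) x = (pal ends G π x).image (Equiv.swap α β) := by
  unfold pal
  rw [Finset.image_image]
  apply Finset.image_congr
  intro e he'
  exact swapC_eq_of_near hx he'

lemma mem_pal_swapC_near {w x : V} (hx : Reach ends G π α β w x) {δ : Fin k} :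
    δ ∈ pal ends G (swapC ends G π α β w) x ↔ Equiv.swap α β δ ∈ pal ends G π x := by
  rw [pal_swapC_near hx]
  constructor
  · intro h
    obtain ⟨γ, hγ, hδ⟩ := Finset.mem_image.mp h
    rwa [← hδ, Equiv.swap_apply_self]
  · intro h
    exact Finset.mem_image.mpr ⟨_, h, Equiv.swap_apply_self _ _ _⟩

lemma proper_swapC (hp : Proper ends G π) (w : V) :
    Proper ends G (swapC ends G π α β w) := by
  intro v e he f hf hef
  by_cases hv : Reach ends G π α β w v
  · rw [swapC_eq_of_near hv he, swapC_eq_of_near hv hf] at hef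
    exact hp v e he f hf ((Equiv.swap α β).injective hef)
  · rw [swapC_eq_of_far hv (mem_star.mp he).2, swapC_eq_of_far hv (mem_star.mp hf).2] at hef
    exact hp v e he f hf hef

end Swap

section Kempe

variable {ends : E → Sym2 V} {k : ℕ} {F : Finset E} {c ystar : V} {estar : E}

/-- **Kempe-chain lemma (P).** If no proper coloring of `F` exists, `w` is a fan
vertex missing `β`, and `α` is missing at `c`, then `w` is connected to `c` in
the `(α,β)`-subgraph. -/
lemma reach_of_unextendable (hl : ∀ e : E, ¬ (ends e).IsDiag)
    (hestar : estar ∈ F) (hends : ends estar = s(c, ystar))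
    (hNoExt : ¬ ∃ ψ : E → Fin k, Proper ends F ψ)
    {π : E → Fin k} (hp : Proper ends (F.erase estar) π)
    {w : V} {L : List (E × Fin k × V)} (hch : Chain ends F c ystar estar π w L)
    {α β : Fin k} (hβw : β ∉ pal ends (F.erase estar) π w)
    (hαc : α ∉ pal ends (F.erase estar) π c) :
    Reach ends (F.erase estar) π α β w c := by
  by_contra hcK
  set F' := F.erase estar with hF'
  set π' := swapC ends F' π α β w with hπ'
  have hp' : Proper ends F' π' := proper_swapC hp w
  have hαc' : α ∉ pal ends F' π' c := by
    rw [hπ', pal_swapC_far hcK]; exact hαc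
  have aux : ∀ (M : List (E × Fin k × V)) (u : V), Chain ends F c ystar estar π u M →
      Chain ends F c ystar estar π' u M ∨
        ∃ u' M', Chain ends F c ystar estar π' u' M' ∧ α ∉ pal ends F' π' u' := by
    intro M
    induction M with
    | nil => exact fun u hu => Or.inl hu
    | cons t M' ih =>
      intro u hu
      obtain ⟨e, β₁, u'⟩ := t
      obtain ⟨he, hends', hπe, hβ₁, hch'⟩ := hu
      rcases ih u' hch' with hch'' | hres
      · -- the tail is still a chain for π'; check the head conditions
        have hc_mem : c ∈ ends e := by rw [hends']; simp
        have hπ'e : π' e = π e := swapC_eq_of_far hcK hc_mem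
        by_cases hb : β₁ ∉ pal ends F' π' u'
        · exact Or.inl ⟨he, hends', by rw [hπ'e]; exact hπe, hb, hch''⟩
        · push_neg at hb
          have hu'K : Reach ends F' π α β w u' := by
            by_contra hK
            rw [hπ', pal_swapC_far hK] at hb
            exact hβ₁ hb
          have hswap : Equiv.swap α β β₁ ∈ pal ends F' π u' :=
            (mem_pal_swapC_near hu'K).mp hb
          have hstar_c : e ∈ star ends F' c := mem_star.mpr ⟨he, hc_mem⟩
          have hβ₁α : β₁ ≠ α := by
            intro h
            exact hαc (h ▸ hπe ▸ color_mem_pal hstar_c)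
          have hβ₁β : β₁ = β := by
            by_contra hne
            rw [Equiv.swap_apply_of_ne_of_ne hβ₁α hne] at hswap
            exact hβ₁ hswap
          refine Or.inr ⟨u', M', hch'', ?_⟩
          intro hα
          have := (mem_pal_swapC_near hu'K).mp hα
          rw [Equiv.swap_apply_left] at this
          exact hβ₁ (hβ₁β ▸ this)
      · exact Or.inr hres
  rcases aux L w hch with hchL | ⟨u', M', hch', hαu'⟩
  · have hαw' : α ∉ pal ends F' π' w := by
      intro hα
      have := (mem_pal_swapC_near (Relation.ReflTransGen.refl)).mp hα
      rw [Equiv.swap_apply_left] at this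
      exact hβw this
    obtain ⟨L₂, hch₂, hnd₂⟩ := chain_nodup hl hchL
    exact hNoExt (chain_extend hl hestar hends hp' hch₂ hnd₂ hαc' hαw')
  · obtain ⟨L₂, hch₂, hnd₂⟩ := chain_nodup hl hch'
    exact hNoExt (chain_extend hl hestar hends hp' hch₂ hnd₂ hαc' hαu')

end Kempe

section Counting

variable {ends : E → Sym2 V} {k : ℕ}

/-- **Counting lemma.** In a sub-multigraph with maximum degree at most 2, three
distinct vertices of degree at most 1 cannot be mutually connected. -/
lemma three_ends (hl : ∀ e : E, ¬ (ends e).IsDiag) (Hs : Finset E)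
    (hdeg : ∀ v : V, (star ends Hs v).card ≤ 2)
    {a b c' : V} (hab : a ≠ b) (hac : a ≠ c') (hbc : b ≠ c')
    (hda : (star ends Hs a).card ≤ 1) (hdb : (star ends Hs b).card ≤ 1)
    (hdc : (star ends Hs c').card ≤ 1)
    (hrab : Relation.ReflTransGen (fun u v => ∃ e ∈ Hs, ends e = s(u, v)) a b)
    (hrac : Relation.ReflTransGen (fun u v => ∃ e ∈ Hs, ends e = s(u, v)) a c') :
    False := by
  set r : V → V → Prop := fun u v => ∃ e ∈ Hs, ends e = s(u, v) with hr
  let SG : SimpleGraph V :=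
    { Adj := fun u v => u ≠ v ∧ r u v
      symm := by
        constructor
        rintro u v ⟨huv, e, he, hends⟩
        exact ⟨huv.symm, e, he, by rw [hends, Sym2.eq_swap]⟩
      loopless := ⟨fun u h => h.1 rfl⟩ }
  have hreach : ∀ {u v : V}, Relation.ReflTransGen r u v → SG.Reachable u v := by
    intro u v h
    induction h with
    | refl => rfl
    | tail hs h ih =>
      obtain ⟨e, he, hends⟩ := h
      exact ih.trans (SimpleGraph.Adj.reachable ⟨ne_of_ends hl hends, e, he, hends⟩)
  classical
  set KK : Finset V := Finset.univ.filter (fun v => SG.Reachable a v) with hKK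
  have haK : a ∈ KK := by
    simp only [hKK, Finset.mem_filter, Finset.mem_univ, true_and]
    exact SimpleGraph.Reachable.refl a
  have hbK : b ∈ KK := by
    simp only [hKK, Finset.mem_filter, Finset.mem_univ, true_and]; exact hreach hrab
  have hcK : c' ∈ KK := by
    simp only [hKK, Finset.mem_filter, Finset.mem_univ, true_and]; exact hreach hrac
  have hclosure : ∀ {e : E}, e ∈ Hs → ∀ {u v : V}, u ∈ ends e → u ∈ KK → v ∈ ends e → v ∈ KK := by
    intro e he u v hu huK hv
    by_cases huv : u = v
    · exact huv ▸ huK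
    · have hadj : SG.Adj u v := ⟨huv, e, he, (Sym2.mem_and_mem_iff huv).mp ⟨hu, hv⟩⟩
      simp only [hKK, Finset.mem_filter, Finset.mem_univ, true_and] at huK ⊢
      exact huK.trans hadj.reachable
  set EK : Finset E := Hs.filter (fun e => ∃ v ∈ ends e, v ∈ KK) with hEK
  -- double counting
  have hsum : ∑ v ∈ KK, (star ends Hs v).card = 2 * EK.card := by
    have h1 : ∀ v, (star ends Hs v).card = ∑ e ∈ Hs, if v ∈ ends e then 1 else 0 := by
      intro v
      rw [star, Finset.card_filter]
    have h2 : ∑ v ∈ KK, (star ends Hs v).card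
        = ∑ e ∈ Hs, (KK.filter (fun v => v ∈ ends e)).card := by
      simp only [h1]
      rw [Finset.sum_comm]
      congr 1
      ext e
      rw [Finset.card_filter]
    rw [h2]
    have h3 : ∀ e ∈ Hs, (KK.filter (fun v => v ∈ ends e)).card
        = if (∃ v ∈ ends e, v ∈ KK) then 2 else 0 := by
      intro e he
      obtain ⟨u, v, huv, hends⟩ := exists_ends hl e
      by_cases htouch : ∃ x ∈ ends e, x ∈ KK
      · rw [if_pos htouch]
        obtain ⟨x, hx, hxK⟩ := htouch
        have huK : u ∈ KK := hclosure he hx hxK (by rw [hends]; simp)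
        have hvK : v ∈ KK := hclosure he hx hxK (by rw [hends]; simp)
        have : KK.filter (fun x => x ∈ ends e) = {u, v} := by
          ext x
          simp only [Finset.mem_filter, Finset.mem_insert, Finset.mem_singleton]
          constructor
          · rintro ⟨_, hx'⟩
            rw [hends, Sym2.mem_iff] at hx'
            exact hx'
          · rintro (h | h) <;> subst h
            · exact ⟨huK, by rw [hends]; simp⟩
            · exact ⟨hvK, by rw [hends]; simp⟩
        rw [this, Finset.card_insert_of_notMem (by simp [huv]), Finset.card_singleton]
      · rw [if_neg htouch]
        rw [Finset.card_eq_zero, Finset.filter_eq_empty_iff]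
        intro x hxK
        exact fun hxe => htouch ⟨x, hxe, hxK⟩
    rw [Finset.sum_congr rfl h3, Finset.sum_ite, Finset.sum_const, Finset.sum_const_zero,
      add_zero, smul_eq_mul, mul_comm]
  -- injection: |KK| - 1 ≤ |EK|
  have hinj : KK.card - 1 ≤ EK.card := by
    have key : ∀ v ∈ KK.erase a, ∃ e, e ∈ EK ∧ ∃ u, ends e = s(v, u) ∧ SG.dist a u < SG.dist a v := by
      intro v hv
      obtain ⟨hva, hvK⟩ := Finset.mem_erase.mp hv
      have hrav : SG.Reachable a v := by
        simpa [hKK] using hvK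
      obtain ⟨p, hp⟩ := hrav.exists_walk_length_eq_dist
      rcases hq : p.reverse with _ | ⟨hadj, q'⟩
      · exfalso
        have := congrArg SimpleGraph.Walk.length hq
        rw [SimpleGraph.Walk.length_reverse] at this
        exact hva (SimpleGraph.Walk.eq_of_length_eq_zero (by rw [this]; rfl)).symm
      · next u =>
        obtain ⟨hne, e, he, hends⟩ := hadj
        refine ⟨e, ?_, u, hends, ?_⟩
        · rw [hEK, Finset.mem_filter]
          exact ⟨he, v, by rw [hends]; simp, hvK⟩
        · have h1 : SG.dist a u ≤ q'.reverse.length := SimpleGraph.dist_le _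
          rw [SimpleGraph.Walk.length_reverse] at h1
          have h2 : p.reverse.length = q'.length + 1 := by rw [hq]; rfl
          rw [SimpleGraph.Walk.length_reverse, hp] at h2
          omega
    choose f hf using key
    by_cases hne : (KK.erase a).Nonempty
    swap
    · rw [Finset.not_nonempty_iff_eq_empty] at hne
      have : KK.card - 1 = 0 := by
        have := Finset.card_erase_of_mem haK
        rw [hne] at this
        simp at this
        omega
      omega
    obtain ⟨v₀, hv₀⟩ := hne
    have hcard : (KK.erase a).card ≤ EK.card := by
      apply Finset.card_le_card_of_injOn
        (fun v => if h : v ∈ KK.erase a then f v h else f v₀ hv₀)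
      · intro v hv
        rw [Finset.mem_coe] at hv
        simp only [dif_pos hv]
        exact (hf v hv).1
      · intro v₁ hv₁ v₂ hv₂ heq
        simp only [Finset.mem_coe] at hv₁ hv₂
        simp only [dif_pos hv₁, dif_pos hv₂] at heq
        obtain ⟨u₁, hu₁, hd₁⟩ := (hf v₁ hv₁).2
        obtain ⟨u₂, hu₂, hd₂⟩ := (hf v₂ hv₂).2
        rw [heq, hu₂] at hu₁
        rcases Sym2.eq_iff.mp hu₁ with ⟨h1, _⟩ | ⟨h1, h2⟩
        · exact h1.symm
        · subst h1; subst h2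
          omega
    rw [Finset.card_erase_of_mem haK] at hcard
    exact hcard
  -- final counting
  set T : Finset V := insert a (insert b {c'}) with hT
  have hTsub : T ⊆ KK := by
    intro x hx
    rw [hT] at hx
    simp only [Finset.mem_insert, Finset.mem_singleton] at hx
    rcases hx with h | h | h <;> subst h <;> assumption
  have hTcard : T.card = 3 := by
    rw [hT, Finset.card_insert_of_notMem (by simp [hab, hac]),
      Finset.card_insert_of_notMem (by simp [hbc]), Finset.card_singleton]
  have hsplit : ∑ v ∈ KK \ T, (star ends Hs v).card + ∑ v ∈ T, (star ends Hs v).card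
      = ∑ v ∈ KK, (star ends Hs v).card := Finset.sum_sdiff hTsub
  have hsumT : ∑ v ∈ T, (star ends Hs v).card ≤ 3 := by
    rw [hT, Finset.sum_insert (by simp [hab, hac]), Finset.sum_insert (by simp [hbc]),
      Finset.sum_singleton]
    omega
  have hsumrest : ∑ v ∈ KK \ T, (star ends Hs v).card ≤ 2 * (KK \ T).card := by
    calc ∑ v ∈ KK \ T, (star ends Hs v).card ≤ ∑ _v ∈ KK \ T, 2 :=
          Finset.sum_le_sum (fun v _ => hdeg v)
      _ = 2 * (KK \ T).card := by rw [Finset.sum_const, smul_eq_mul, mul_comm]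
  have hsdcard : (KK \ T).card = KK.card - 3 := by
    rw [Finset.card_sdiff_of_subset hTsub, hTcard]
  have h3K : 3 ≤ KK.card := hTcard ▸ Finset.card_le_card hTsub
  omega

end Counting

section LemmaV

variable {ends : E → Sym2 V} {k : ℕ} {F : Finset E} {c ystar : V} {estar : E}

lemma star_erase (e : E) (v : V) :
    star ends (F.erase e) v = (star ends F v).erase e := by
  unfold star
  exact Finset.filter_erase _ _ _

lemma chain_ne_c (hl : ∀ e : E, ¬ (ends e).IsDiag) (hends : ends estar = s(c, ystar))
    {π : E → Fin k} {w : V} {L : List (E × Fin k × V)}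
    (hch : Chain ends F c ystar estar π w L) : w ≠ c := by
  cases L with
  | nil => exact hch ▸ (ne_of_ends hl hends).symm
  | cons t L => exact (ne_of_ends hl hch.2.1).symm

lemma chain_adj (hestar : estar ∈ F) (hends : ends estar = s(c, ystar))
    {π : E → Fin k} {w : V} {L : List (E × Fin k × V)}
    (hch : Chain ends F c ystar estar π w L) : ∃ e ∈ F, ends e = s(c, w) := by
  cases L with
  | nil => exact ⟨estar, hestar, hch ▸ hends⟩
  | cons t L => exact ⟨t.1, Finset.mem_of_mem_erase hch.1, hch.2.1⟩

/-- degrees in the `(α,β)`-subgraph are bounded by palette counting. -/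
lemma star_card_le_of_pal {G : Finset E} {π : E → Fin k} (hp : Proper ends G π)
    {Hs : Finset E} (hHs : Hs ⊆ G) {v : V} {S : Finset (Fin k)}
    (hS : ∀ e ∈ star ends Hs v, π e ∈ S) : (star ends Hs v).card ≤ S.card := by
  have hinj : Set.InjOn π (star ends Hs v) := by
    intro e he f hf hef
    exact hp v e (star_subset hHs v he) f (star_subset hHs v hf) hef
  rw [← Finset.card_image_of_injOn hinj]
  exact Finset.card_le_card (fun x hx => by
    obtain ⟨e, he, hex⟩ := Finset.mem_image.mp hx
    exact hex ▸ hS e he)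

/-- **Disjointness (F3).** Missing sets of distinct fan vertices are disjoint. -/
lemma missing_disjoint (hl : ∀ e : E, ¬ (ends e).IsDiag)
    (hestar : estar ∈ F) (hends : ends estar = s(c, ystar))
    (hNoExt : ¬ ∃ ψ : E → Fin k, Proper ends F ψ)
    {π : E → Fin k} (hp : Proper ends (F.erase estar) π)
    (hck : deg ends F c ≤ k)
    {w w' : V} {L L' : List (E × Fin k × V)}
    (hw : Chain ends F c ystar estar π w L) (hw' : Chain ends F c ystar estar π w' L')
    (hne : w ≠ w') {β : Fin k}
    (hβ : β ∉ pal ends (F.erase estar) π w) (hβ' : β ∉ pal ends (F.erase estar) π w') :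
    False := by
  set F' := F.erase estar with hF'
  have hstar_c : star ends F' c = (star ends F c).erase estar := star_erase estar c
  have hestar_star : estar ∈ star ends F c := mem_star.mpr ⟨hestar, by rw [hends]; simp⟩
  have hcard_c : (star ends F' c).card = deg ends F c - 1 := by
    rw [hstar_c, Finset.card_erase_of_mem hestar_star]; rfl
  -- β must be on the palette of c
  by_cases hβc : β ∉ pal ends F' π c
  · obtain ⟨L₂, hch₂, hnd₂⟩ := chain_nodup hl hw
    exact hNoExt (chain_extend hl hestar hends hp hch₂ hnd₂ hβc hβ)
  push_neg at hβc
  -- get a color missing at c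
  have hpalc : (pal ends F' π c).card < k := by
    have h1 : (pal ends F' π c).card ≤ (star ends F' c).card := Finset.card_image_le
    have h2 : 1 ≤ deg ends F c := Finset.card_pos.mpr ⟨estar, hestar_star⟩
    omega
  obtain ⟨α, hα⟩ : ∃ α : Fin k, α ∉ pal ends F' π c := by
    have : (Finset.univ \ pal ends F' π c).Nonempty := by
      rw [← Finset.card_pos, Finset.card_sdiff_of_subset (Finset.subset_univ _), Finset.card_univ,
        Fintype.card_fin]
      omega
    obtain ⟨α, hα⟩ := this
    exact ⟨α, (Finset.mem_sdiff.mp hα).2⟩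
  -- both w and w' are connected to c in the (α,β)-subgraph
  have hr1 : Reach ends F' π α β w c := reach_of_unextendable hl hestar hends hNoExt hp hw hβ hα
  have hr2 : Reach ends F' π α β w' c := reach_of_unextendable hl hestar hends hNoExt hp hw' hβ' hα
  -- apply the counting lemma
  set Hs : Finset E := F'.filter (fun e => π e = α ∨ π e = β) with hHs
  have hHsub : Hs ⊆ F' := Finset.filter_subset _ _
  have hstep : ∀ u v : V, stepR ends F' π α β u v ↔ (∃ e ∈ Hs, ends e = s(u, v)) := by
    intro u v
    constructor
    · rintro ⟨e, ⟨he1, he2⟩, he3⟩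
      exact ⟨e, Finset.mem_filter.mpr ⟨he1, he2⟩, he3⟩
    · rintro ⟨e, he, he3⟩
      obtain ⟨he1, he2⟩ := Finset.mem_filter.mp he
      exact ⟨e, ⟨he1, he2⟩, he3⟩
  have hconv : ∀ {u v : V}, Reach ends F' π α β u v →
      Relation.ReflTransGen (fun u v => ∃ e ∈ Hs, ends e = s(u, v)) u v := by
    intro u v h
    induction h with
    | refl => exact Relation.ReflTransGen.refl
    | tail hs h ih => exact ih.tail ((hstep _ _).mp h)
  have hdeg2 : ∀ v : V, (star ends Hs v).card ≤ 2 := by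
    intro v
    refine le_trans (star_card_le_of_pal hp hHsub (S := {α, β}) ?_) ?_
    · intro e he
      rcases (Finset.mem_filter.mp (mem_star.mp he).1).2 with h | h <;> simp [h]
    · exact Finset.card_insert_le _ _ |>.trans (by simp)
  have hdegc : (star ends Hs c).card ≤ 1 := by
    refine le_trans (star_card_le_of_pal hp hHsub (S := {β}) ?_) (by simp)
    intro e he
    have hmem := Finset.mem_filter.mp (mem_star.mp he).1
    rcases hmem.2 with h | h
    · exact absurd (h ▸ color_mem_pal (mem_star.mpr ⟨hmem.1, (mem_star.mp he).2⟩)) hα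
    · simp [h]
  have hmiss : ∀ x : V, β ∉ pal ends F' π x → (star ends Hs x).card ≤ 1 := by
    intro x hβx
    refine le_trans (star_card_le_of_pal hp hHsub (S := {α}) ?_) (by simp)
    intro e he
    have hmem := Finset.mem_filter.mp (mem_star.mp he).1
    rcases hmem.2 with h | h
    · simp [h]
    · exact absurd (h ▸ color_mem_pal (mem_star.mpr ⟨hmem.1, (mem_star.mp he).2⟩)) hβx
  exact three_ends hl Hs hdeg2 (chain_ne_c hl hends hw).symm (chain_ne_c hl hends hw').symm
    hne hdegc (hmiss w hβ) (hmiss w' hβ')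
    (hconv (reach_symm hr1)) (hconv (reach_symm hr2))

/-- **Local Vizing extension lemma.** If every neighbor `w` of `c` satisfies
`deg w + mult(c,w) ≤ k`, and `deg c ≤ k`, then a proper coloring of `F ∖ {estar}`
can be transformed into a proper coloring of `F`. -/
lemma extension (hl : ∀ e : E, ¬ (ends e).IsDiag)
    (hestar : estar ∈ F) (hends : ends estar = s(c, ystar))
    (hb : ∀ w : V, (∃ e ∈ F, ends e = s(c, w)) → deg ends F w + mult ends F c w ≤ k)
    (hc : deg ends F c ≤ k)
    {π : E → Fin k} (hp : Proper ends (F.erase estar) π) :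
    ∃ ψ : E → Fin k, Proper ends F ψ := by
  by_contra hNoExt
  classical
  set F' := F.erase estar with hF'
  set W : Finset V := Finset.univ.filter
    (fun w => ∃ L, Chain ends F c ystar estar π w L) with hW
  have hyW : ystar ∈ W := by
    rw [hW, Finset.mem_filter]
    exact ⟨Finset.mem_univ _, [], rfl⟩
  have hWchain : ∀ w ∈ W, ∃ L, Chain ends F c ystar estar π w L := by
    intro w hw
    exact (Finset.mem_filter.mp hw).2
  set Af : V → Finset (Fin k) := fun w => Finset.univ \ pal ends F' π w with hAf
  -- (a) every missing color of a fan vertex lies on the palette of c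
  have hsub : ∀ w ∈ W, Af w ⊆ pal ends F' π c := by
    intro w hw β hβ
    obtain ⟨L, hch⟩ := hWchain w hw
    rw [hAf, Finset.mem_sdiff] at hβ
    by_contra hβc
    obtain ⟨L₂, hch₂, hnd₂⟩ := chain_nodup hl hch
    exact hNoExt (chain_extend hl hestar hends hp hch₂ hnd₂ hβc hβ.2)
  -- (b) missing sets are pairwise disjoint
  have hdisj : ∀ w ∈ W, ∀ w' ∈ W, w ≠ w' → Disjoint (Af w) (Af w') := by
    intro w hw w' hw' hne
    rw [Finset.disjoint_left]
    intro β hβ hβ'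
    rw [hAf, Finset.mem_sdiff] at hβ hβ'
    obtain ⟨L, hch⟩ := hWchain w hw
    obtain ⟨L', hch'⟩ := hWchain w' hw'
    exact missing_disjoint hl hestar hends hNoExt hp hc hch hch' hne hβ.2 hβ'.2
  set B : Finset (Fin k) := W.biUnion Af with hB
  have hBcard : B.card = ∑ w ∈ W, (Af w).card := Finset.card_biUnion hdisj
  -- lower bound for |Af w|
  have hlow : ∀ w ∈ W, mult ends F c w + (if w = ystar then 1 else 0) ≤ (Af w).card := by
    intro w hw
    obtain ⟨L, hch⟩ := hWchain w hw
    have hwadj := chain_adj hestar hends hch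
    have hbw := hb w hwadj
    have hAcard : (Af w).card = k - (pal ends F' π w).card := by
      rw [hAf, Finset.card_sdiff_of_subset (Finset.subset_univ _), Finset.card_univ, Fintype.card_fin]
    have hpal_le : (pal ends F' π w).card ≤ (star ends F' w).card := Finset.card_image_le
    by_cases hwy : w = ystar
    · have hstar_y : star ends F' w = (star ends F w).erase estar := star_erase estar w
      have hmem : estar ∈ star ends F w := mem_star.mpr ⟨hestar, by rw [hwy, hends]; simp⟩
      have h1 : (star ends F' w).card = deg ends F w - 1 := by
        rw [hstar_y, Finset.card_erase_of_mem hmem]; rfl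
      have h2 : 1 ≤ deg ends F w := Finset.card_pos.mpr ⟨estar, hmem⟩
      simp only [if_pos hwy]
      omega
    · have h1 : (star ends F' w).card ≤ deg ends F w :=
        Finset.card_le_card (star_subset (Finset.erase_subset _ _) w)
      simp only [if_neg hwy]
      omega
  have hBlow : ∑ w ∈ W, mult ends F c w + 1 ≤ B.card := by
    rw [hBcard]
    calc ∑ w ∈ W, mult ends F c w + 1
        = ∑ w ∈ W, mult ends F c w + ∑ w ∈ W, (if w = ystar then 1 else 0) := by
          rw [Finset.sum_ite_eq' W ystar (fun _ => 1), if_pos hyW]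
      _ = ∑ w ∈ W, (mult ends F c w + (if w = ystar then 1 else 0)) := by
          rw [Finset.sum_add_distrib]
      _ ≤ ∑ w ∈ W, (Af w).card := Finset.sum_le_sum hlow
  -- upper bound: inject B into the fan edges
  set D : Finset E := (star ends F' c).filter (fun e => ∃ w ∈ W, ends e = s(c, w)) with hD
  have hBD : B.card ≤ D.card := by
    have hchoice : ∀ β ∈ B, ∃ e ∈ D, π e = β := by
      intro β hβ
      obtain ⟨w, hw, hβw⟩ := Finset.mem_biUnion.mp hβ
      have hβc : β ∈ pal ends F' π c := hsub w hw hβw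
      obtain ⟨e, he, heβ⟩ := mem_pal.mp hβc
      refine ⟨e, ?_, heβ⟩
      rw [hD, Finset.mem_filter]
      refine ⟨he, ?_⟩
      -- the far end of e is a fan vertex
      obtain ⟨u, v, huv, hends'⟩ := exists_ends hl e
      have hcmem : c ∈ ends e := (mem_star.mp he).2
      rw [hends', Sym2.mem_iff] at hcmem
      obtain ⟨w0, hw0⟩ : ∃ w0, ends e = s(c, w0) ∧ w0 ≠ c := by
        rcases hcmem with h | h
        · exact ⟨v, by rw [hends', h], by rw [h]; exact huv.symm⟩
        · exact ⟨u, by rw [hends', h, Sym2.eq_swap], by rw [h]; exact huv⟩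
      refine ⟨w0, ?_, hw0.1⟩
      rw [hW, Finset.mem_filter]
      refine ⟨Finset.mem_univ _, ?_⟩
      obtain ⟨L, hch⟩ := hWchain w hw
      rw [hAf, Finset.mem_sdiff] at hβw
      exact ⟨(e, β, w) :: L, (mem_star.mp he).1, hw0.1, heβ, hβw.2, hch⟩
    choose g hg using hchoice
    by_cases hBne : B.Nonempty
    swap
    · rw [Finset.not_nonempty_iff_eq_empty] at hBne
      simp [hBne]
    obtain ⟨β₀, hβ₀⟩ := hBne
    apply Finset.card_le_card_of_injOn (fun β => if h : β ∈ B then g β h else g β₀ hβ₀)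
    · intro β hβ
      rw [Finset.mem_coe] at hβ
      simp only [dif_pos hβ]
      exact (hg β hβ).1
    · intro β₁ hβ₁ β₂ hβ₂ heq
      simp only [Finset.mem_coe] at hβ₁ hβ₂
      simp only [dif_pos hβ₁, dif_pos hβ₂] at heq
      rw [← (hg β₁ hβ₁).2, ← (hg β₂ hβ₂).2, heq]
  -- D is covered by the parallel classes of fan vertices
  have hDsum : D.card ≤ ∑ w ∈ W, mult ends F' c w := by
    have hDsub : D ⊆ W.biUnion (fun w => F'.filter (fun e => ends e = s(c, w))) := by
      intro e he
      rw [hD, Finset.mem_filter] at he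
      obtain ⟨w, hw, hends'⟩ := he.2
      exact Finset.mem_biUnion.mpr ⟨w, hw, Finset.mem_filter.mpr ⟨(mem_star.mp he.1).1, hends'⟩⟩
    exact le_trans (Finset.card_le_card hDsub) (Finset.card_biUnion_le)
  -- but the parallel classes in F' are strictly smaller in total
  have hstrict : ∑ w ∈ W, mult ends F' c w < ∑ w ∈ W, mult ends F c w := by
    apply Finset.sum_lt_sum
    · intro w hw
      exact mult_le_of_subset (Finset.erase_subset _ _) c w
    · refine ⟨ystar, hyW, ?_⟩
      have hmem : estar ∈ F.filter (fun e => ends e = s(c, ystar)) :=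
        Finset.mem_filter.mpr ⟨hestar, hends⟩
      have : (F.erase estar).filter (fun e => ends e = s(c, ystar))
          = (F.filter (fun e => ends e = s(c, ystar))).erase estar :=
        Finset.filter_erase _ _ _
      unfold mult
      rw [this, Finset.card_erase_of_mem hmem]
      have h1 : 1 ≤ (F.filter (fun e => ends e = s(c, ystar))).card :=
        Finset.card_pos.mpr ⟨estar, hmem⟩
      omega
  omega

end LemmaV

section Main

variable {ends : E → Sym2 V} {k : ℕ}

/-- the stability hypothesis, relativized to a sub-multigraph. -/
def Stable (ends : E → Sym2 V) (k : ℕ) (F : Finset E) : Prop :=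
  ∀ e ∈ F, ∀ u w : V, ends e = s(u, w) →
    ¬(k < deg ends F u + mu ends F u ∧ k < deg ends F w + mu ends F w)

lemma stable_mono {F F' : Finset E} (h : F' ⊆ F) (hs : Stable ends k F) :
    Stable ends k F' := by
  intro e he u w hew hcon
  refine hs e (h he) u w hew ⟨?_, ?_⟩
  · calc k < deg ends F' u + mu ends F' u := hcon.1
      _ ≤ deg ends F u + mu ends F u := by
        exact Nat.add_le_add (deg_le_of_subset h u) (mu_le_of_subset h u)
  · calc k < deg ends F' w + mu ends F' w := hcon.2
      _ ≤ deg ends F w + mu ends F w := by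
        exact Nat.add_le_add (deg_le_of_subset h w) (mu_le_of_subset h w)

lemma good_of_proper (hk : 0 < k) {F : Finset E} {π : E → Fin k}
    (hdeg : ∀ v : V, deg ends F v ≤ k) (hp : Proper ends F π) : Good ends F π := by
  intro v
  have : (pal ends F π v).card = deg ends F v := by
    unfold pal deg
    apply Finset.card_image_of_injOn
    intro e he f hf hef
    exact hp v e he f hf hef
  rw [this]
  exact min_le_left _ _

lemma proper_of_good {F : Finset E} {π : E → Fin k}
    (hdeg : ∀ v : V, deg ends F v ≤ k) (hg : Good ends F π) : Proper ends F π := by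
  intro v
  have h1 : min (deg ends F v) k = deg ends F v := min_eq_left (hdeg v)
  have h2 : (pal ends F π v).card = (star ends F v).card := by
    have := hg v
    rw [h1] at this
    exact le_antisymm (Finset.card_image_le) this
  have := (Finset.card_image_iff).mp h2
  intro e he f hf hef
  exact this he hf hef

lemma mult_pos {F : Finset E} {e : E} {u w : V} (he : e ∈ F) (hew : ends e = s(u, w)) :
    1 ≤ mult ends F u w :=
  Finset.card_pos.mpr ⟨e, Finset.mem_filter.mpr ⟨he, hew⟩⟩

lemma mult_le_mu {F : Finset E} {u w : V} (huw : u ≠ w) :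
    mult ends F u w ≤ mu ends F w := by
  refine le_trans ?_ (Finset.le_sup (f := fun u : V => if u ≠ w then mult ends F u w else 0)
    (Finset.mem_univ u))
  simp [huw]

/-- the main induction. -/
lemma main_induction (hl : ∀ e : E, ¬ (ends e).IsDiag) (hk : 0 < k) :
    ∀ (n : ℕ) (F : Finset E), F.card = n → Stable ends k F →
      ∃ π : E → Fin k, Good ends F π := by
  intro n
  induction n using Nat.strong_induction_on with
  | _ n ih =>
    intro F hcard hstab
    rcases Finset.eq_empty_or_nonempty F with hF | hF
    · refine ⟨fun _ => ⟨0, hk⟩, ?_⟩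
      intro v
      have : star ends F v = ∅ := by rw [hF]; rfl
      simp [deg, this]
    by_cases hA : ∃ v : V, k + 1 ≤ deg ends F v
    · -- CASE A: peel an edge at a vertex of degree > k
      obtain ⟨v, hv⟩ := hA
      have hne : (star ends F v).Nonempty := by
        rw [← Finset.card_pos]; unfold deg at hv; omega
      obtain ⟨e0, he0⟩ := hne
      have he0F : e0 ∈ F := (mem_star.mp he0).1
      obtain ⟨u, hu⟩ : ∃ u, ends e0 = s(v, u) ∧ u ≠ v := by
        obtain ⟨x, y, hxy, hends'⟩ := exists_ends hl e0
        have hvm : v ∈ ends e0 := (mem_star.mp he0).2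
        rw [hends', Sym2.mem_iff] at hvm
        rcases hvm with h | h
        · exact ⟨y, by rw [hends', h], by rw [h]; exact hxy.symm⟩
        · exact ⟨x, by rw [hends', h, Sym2.eq_swap], by rw [h]; exact hxy⟩
      set F' := F.erase e0 with hF'
      have hcard' : F'.card = n - 1 := by
        rw [hF', Finset.card_erase_of_mem he0F, hcard]
      have hlt : n - 1 < n := by
        have : 1 ≤ n := hcard ▸ Finset.card_pos.mpr ⟨e0, he0F⟩
        omega
      obtain ⟨π, hπ⟩ := ih (n - 1) hlt F' hcard' (stable_mono (Finset.erase_subset _ _) hstab)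
      -- v is heavy, so u is light
      have hlight : deg ends F u + mu ends F u ≤ k := by
        have := hstab e0 he0F v u hu.1
        have hheavy : k < deg ends F v + mu ends F v := by omega
        by_contra hcon
        exact this ⟨hheavy, by omega⟩
      have hmuu : 1 ≤ mu ends F u := le_trans (mult_pos he0F hu.1) (mult_le_mu hu.2.symm)
      have hdegu : deg ends F u ≤ k - 1 := by omega
      -- find a color free at u
      have hstar_u : star ends F' u = (star ends F u).erase e0 := star_erase e0 u
      have he0u : e0 ∈ star ends F u := mem_star.mpr ⟨he0F, by rw [hu.1]; simp⟩
      have hdegu' : deg ends F' u = deg ends F u - 1 := by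
        unfold deg; rw [hstar_u, Finset.card_erase_of_mem he0u]
      obtain ⟨γ, hγ⟩ : ∃ γ : Fin k, γ ∉ pal ends F' π u := by
        have h1 : (pal ends F' π u).card < k := by
          have h2 : (pal ends F' π u).card ≤ deg ends F' u := pal_card_le_deg F' π u
          omega
        have : (Finset.univ \ pal ends F' π u).Nonempty := by
          rw [← Finset.card_pos, Finset.card_sdiff_of_subset (Finset.subset_univ _), Finset.card_univ,
            Fintype.card_fin]
          omega
        obtain ⟨γ, hγ⟩ := this
        exact ⟨γ, (Finset.mem_sdiff.mp hγ).2⟩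
      refine ⟨Function.update π e0 γ, ?_⟩
      intro x
      by_cases hx : x ∈ ends e0
      · -- x = u or x = v
        have hstar_x : star ends F x = insert e0 (star ends F' x) := by
          rw [star_erase, Finset.insert_erase (mem_star.mpr ⟨he0F, hx⟩)]
        have he0x : e0 ∉ star ends F' x := by
          rw [star_erase]; exact Finset.notMem_erase _ _
        have hpal_x : pal ends F (Function.update π e0 γ) x
            = insert γ (pal ends F' π x) := by
          unfold pal
          rw [hstar_x, Finset.image_insert, Function.update_self]
          congr 1
          apply Finset.image_congr
          intro f hf
          exact Function.update_of_ne (fun h : f = e0 => he0x (h ▸ hf)) _ _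
        rw [hpal_x]
        have hdegx : deg ends F x = deg ends F' x + 1 := by
          unfold deg
          rw [hstar_x, Finset.card_insert_of_notMem he0x]
        rw [hu.1, Sym2.mem_iff] at hx
        rcases hx with h | h
        · -- x = v : high degree, palette already ≥ k
          subst h
          have := hπ x
          have hk' : min (deg ends F' x) k = k := by
            unfold deg at hv hdegx ⊢; omega
          rw [hk'] at this
          calc min (deg ends F x) k ≤ k := min_le_right _ _
            _ ≤ (pal ends F' π x).card := this
            _ ≤ (insert γ (pal ends F' π x)).card := Finset.card_le_card (Finset.subset_insert _ _)
        · -- x = u : palette grows by one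
          subst h
          have := hπ x
          have hmin' : min (deg ends F' x) k = deg ends F' x := by
            unfold deg at hdegu hdegu' ⊢
            omega
          rw [hmin'] at this
          have hcardins : (insert γ (pal ends F' π x)).card = (pal ends F' π x).card + 1 :=
            Finset.card_insert_of_notMem hγ
          have hminx : min (deg ends F x) k = deg ends F x := by omega
          omega
      · -- x untouched
        have hstar_x : star ends F x = star ends F' x := by
          rw [star_erase]
          rw [Finset.erase_eq_of_notMem (fun h => hx (mem_star.mp h).2)]
        have hpal_x : pal ends F (Function.update π e0 γ) x = pal ends F' π x := by
          unfold pal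
          rw [hstar_x]
          apply Finset.image_congr
          intro f hf
          have hne0 : f ≠ e0 := fun h => hx (h ▸ (mem_star.mp hf).2)
          exact Function.update_of_ne hne0 _ _
        rw [hpal_x]
        have : deg ends F x = deg ends F' x := by unfold deg; rw [hstar_x]
        rw [this]
        exact hπ x
    · -- CASE B: all degrees at most k, use the extension lemma
      push_neg at hA
      have hdegF : ∀ v : V, deg ends F v ≤ k := fun v => by have := hA v; omega
      -- choose an edge and a center whose neighbors are all light
      obtain ⟨e0, he0F, c, y0, hends0, hAllLight⟩ :
          ∃ e0 ∈ F, ∃ c y0 : V, ends e0 = s(c, y0) ∧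
            ∀ w : V, (∃ e ∈ F, ends e = s(c, w)) → deg ends F w + mu ends F w ≤ k := by
        by_cases hB1 : ∃ e ∈ F, ∃ x y : V, ends e = s(x, y)
            ∧ k < deg ends F y + mu ends F y
        · obtain ⟨e, he, x, y, hexy, hheavy⟩ := hB1
          refine ⟨e, he, y, x, by rw [hexy, Sym2.eq_swap], ?_⟩
          intro w hw
          obtain ⟨f, hf, hfw⟩ := hw
          have := hstab f hf y w hfw
          by_contra hcon
          exact this ⟨hheavy, by omega⟩
        · push_neg at hB1
          obtain ⟨e, he⟩ := hF
          obtain ⟨x, y, hxy, hexy⟩ := exists_ends hl e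
          refine ⟨e, he, x, y, hexy, ?_⟩
          intro w hw
          obtain ⟨f, hf, hfw⟩ := hw
          exact hB1 f hf x w hfw
      -- apply the induction hypothesis and the extension lemma
      set F' := F.erase e0 with hF'
      have hcard' : F'.card = n - 1 := by
        rw [hF', Finset.card_erase_of_mem he0F, hcard]
      have hlt : n - 1 < n := by
        have : 1 ≤ n := hcard ▸ Finset.card_pos.mpr ⟨e0, he0F⟩
        omega
      obtain ⟨π, hπ⟩ := ih (n - 1) hlt F' hcard' (stable_mono (Finset.erase_subset _ _) hstab)
      have hp : Proper ends F' π :=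
        proper_of_good (fun v => le_trans (deg_le_of_subset (Finset.erase_subset _ _) v)
          (hdegF v)) hπ
      have hb : ∀ w : V, (∃ e ∈ F, ends e = s(c, w)) → deg ends F w + mult ends F c w ≤ k := by
        intro w hw
        have hlight := hAllLight w hw
        obtain ⟨f, hf, hfw⟩ := hw
        have hcw : c ≠ w := ne_of_ends hl hfw
        have := mult_le_mu (ends := ends) (F := F) hcw
        omega
      obtain ⟨ψ, hψ⟩ := extension hl he0F hends0 hb (hdegF c) hp
      exact ⟨ψ, good_of_proper hk hdegF hψ⟩

end Main

end Gupta

/-- **Gupta's second theorem.** For a multigraph `G` and a positive integer `k`, if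
`S := {v : deg(v) + μ(v) > k}` is a stable set, then there is a color assignment
`π : E → [k]` with `|π(δ(v))| ≥ min{deg(v), k}` for every vertex `v`. -/
theorem gupta_stable_set
    {V E : Type*} [Fintype V] [Fintype E] [DecidableEq V] [DecidableEq E]
    (ends : E → Sym2 V) (hloopless : ∀ e : E, ¬ (ends e).IsDiag)
    (k : ℕ) (hk : 0 < k)
    (hstable : ∀ (e : E) (u w : V), ends e = s(u, w) →
      ¬(k < degree ends u + vertexMultiplicity ends u ∧
        k < degree ends w + vertexMultiplicity ends w)) :
    ∃ π : E → Fin k, ∀ v : V,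
      min (degree ends v) k ≤ ((edgeStar ends v).image π).card := by
  have hstable' : Gupta.Stable ends k Finset.univ := by
    intro e _ u w hew
    exact hstable e u w hew
  obtain ⟨π, hπ⟩ := Gupta.main_induction hloopless hk
    (Finset.univ : Finset E).card Finset.univ rfl hstable'
  exact ⟨π, fun v => hπ v⟩
end
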